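/- arXiv:math/0509259 — 3 statements merged into one kernel-verified Lean document; each statement's English description precedes it below -/
import Mathlib

section
/- The diameter of the Sierpiński gasket graph S_n equals 2^{n-1} for every n ≥ 1. -/
/-- Vertex set of the Sierpiński gasket graph `Sₙ`, realized in the triangular
lattice with side length `2^(n-1)`. (`sierpVerts 0` is an unused dummy.) -/
def sierpVerts : ℕ → Finset (ℤ × ℤ)
  | 0 => {(0, 0)}
  | 1 => {(0, 0), (1, 0), (0, 1)}
  | n + 2 =>
      sierpVerts (n + 1) ∪
        (sierpVerts (n + 1)).image (fun p => (p.1 + 2 ^ n, p.2)) ∪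
        (sierpVerts (n + 1)).image (fun p => (p.1, p.2 + 2 ^ n))

/-- Edge set (as ordered pairs, up to the symmetrization below) of `Sₙ`:
`S₁ = K₃`, and `S_{n+2}` is the union of three shifted copies of `S_{n+1}`. -/
def sierpEdges : ℕ → Finset ((ℤ × ℤ) × (ℤ × ℤ))
  | 0 => ∅
  | 1 => {((0, 0), (1, 0)), ((0, 0), (0, 1)), ((1, 0), (0, 1))}
  | n + 2 =>
      sierpEdges (n + 1) ∪
        (sierpEdges (n + 1)).image
          (fun e => ((e.1.1 + 2 ^ n, e.1.2), (e.2.1 + 2 ^ n, e.2.2))) ∪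
        (sierpEdges (n + 1)).image
          (fun e => ((e.1.1, e.1.2 + 2 ^ n), (e.2.1, e.2.2 + 2 ^ n)))

/-- The Sierpiński gasket graph `Sₙ` (meaningful for `n ≥ 1`). -/
def sierpGraph (n : ℕ) : SimpleGraph {p : ℤ × ℤ // p ∈ sierpVerts n} where
  Adj u v := u ≠ v ∧ ((u.1, v.1) ∈ sierpEdges n ∨ (v.1, u.1) ∈ sierpEdges n)
  symm := ⟨by rintro u v ⟨h1, h2⟩; exact ⟨h1.symm, h2.symm⟩⟩
  loopless := ⟨fun u h => h.1 rfl⟩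

instance (n : ℕ) : DecidableRel (sierpGraph n).Adj := fun u v =>
  inferInstanceAs (Decidable (_ ∧ _))

/-- The three corner (degree-two) vertices of `Sₙ`. -/
def sierpCorners (n : ℕ) : Finset (ℤ × ℤ) :=
  {(0, 0), (2 ^ (n - 1), 0), (0, 2 ^ (n - 1))}

open SimpleGraph

lemma edist_map_le {V W : Type*} {G : SimpleGraph V} {H : SimpleGraph W} (f : G →g H) (u v : V) :
    H.edist (f u) (f v) ≤ G.edist u v := by
  rcases eq_or_ne (G.edist u v) ⊤ with h | h
  · simp [h]
  · obtain ⟨p, hp⟩ := SimpleGraph.exists_walk_of_edist_ne_top h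
    calc H.edist (f u) (f v) ≤ ((p.map f).length : ℕ∞) := SimpleGraph.edist_le _
    _ = (p.length : ℕ∞) := by rw [SimpleGraph.Walk.length_map]
    _ = G.edist u v := hp

/-! ### Vertex membership lemmas -/

lemma sierp_mem0 {n : ℕ} {p : ℤ × ℤ} (h : p ∈ sierpVerts (n + 1)) : p ∈ sierpVerts (n + 2) := by
  simp only [sierpVerts, Finset.mem_union]; tauto

lemma sierp_mem1 {n : ℕ} {p : ℤ × ℤ} (h : p ∈ sierpVerts (n + 1)) :
    ((p.1 + 2 ^ n, p.2) : ℤ × ℤ) ∈ sierpVerts (n + 2) := by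
  simp only [sierpVerts, Finset.mem_union, Finset.mem_image]
  exact Or.inl (Or.inr ⟨p, h, rfl⟩)

lemma sierp_mem2 {n : ℕ} {p : ℤ × ℤ} (h : p ∈ sierpVerts (n + 1)) :
    ((p.1, p.2 + 2 ^ n) : ℤ × ℤ) ∈ sierpVerts (n + 2) := by
  simp only [sierpVerts, Finset.mem_union, Finset.mem_image]
  exact Or.inr ⟨p, h, rfl⟩

lemma sierp_mem00 : ∀ n, ((0, 0) : ℤ × ℤ) ∈ sierpVerts (n + 1)
  | 0 => by decide
  | n + 1 => sierp_mem0 (sierp_mem00 n)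

lemma sierp_memX : ∀ n, ((2 ^ n, 0) : ℤ × ℤ) ∈ sierpVerts (n + 1)
  | 0 => by decide
  | n + 1 => by
      rw [show ((2 : ℤ)) ^ (n + 1) = 2 ^ n + 2 ^ n from by ring]
      exact sierp_mem1 (sierp_memX n)

lemma sierp_memY : ∀ n, ((0, 2 ^ n) : ℤ × ℤ) ∈ sierpVerts (n + 1)
  | 0 => by decide
  | n + 1 => by
      rw [show ((2 : ℤ)) ^ (n + 1) = 2 ^ n + 2 ^ n from by ring]
      exact sierp_mem2 (sierp_memY n)

lemma sierp_memXY (n : ℕ) : ((2 ^ n, 2 ^ n) : ℤ × ℤ) ∈ sierpVerts (n + 2) := by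
  have := sierp_mem1 (sierp_memY n)
  simpa using this

/-! ### Edge membership and homs -/

lemma sierp_edge0 {n : ℕ} {e : (ℤ × ℤ) × (ℤ × ℤ)} (h : e ∈ sierpEdges (n + 1)) :
    e ∈ sierpEdges (n + 2) := by
  simp only [sierpEdges, Finset.mem_union]; tauto

lemma sierp_edge1 {n : ℕ} {e : (ℤ × ℤ) × (ℤ × ℤ)} (h : e ∈ sierpEdges (n + 1)) :
    (((e.1.1 + 2 ^ n, e.1.2), (e.2.1 + 2 ^ n, e.2.2)) : (ℤ × ℤ) × (ℤ × ℤ)) ∈ sierpEdges (n + 2) := by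
  simp only [sierpEdges, Finset.mem_union, Finset.mem_image]
  exact Or.inl (Or.inr ⟨e, h, rfl⟩)

lemma sierp_edge2 {n : ℕ} {e : (ℤ × ℤ) × (ℤ × ℤ)} (h : e ∈ sierpEdges (n + 1)) :
    (((e.1.1, e.1.2 + 2 ^ n), (e.2.1, e.2.2 + 2 ^ n)) : (ℤ × ℤ) × (ℤ × ℤ)) ∈ sierpEdges (n + 2) := by
  simp only [sierpEdges, Finset.mem_union, Finset.mem_image]
  exact Or.inr ⟨e, h, rfl⟩

def sierpHom0 (n : ℕ) : sierpGraph (n + 1) →g sierpGraph (n + 2) where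
  toFun u := ⟨u.1, sierp_mem0 u.2⟩
  map_rel' := by
    rintro u v ⟨hne, h⟩
    refine ⟨?_, ?_⟩
    · intro hh
      apply hne
      have := congrArg Subtype.val hh
      exact Subtype.ext this
    rcases h with h | h
    · exact Or.inl (sierp_edge0 h)
    · exact Or.inr (sierp_edge0 h)

def sierpHom1 (n : ℕ) : sierpGraph (n + 1) →g sierpGraph (n + 2) where
  toFun u := ⟨(u.1.1 + 2 ^ n, u.1.2), sierp_mem1 u.2⟩
  map_rel' := by
    rintro u v ⟨hne, h⟩
    constructor
    · intro hh
      apply hne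
      have := congrArg Subtype.val hh
      simp only [Prod.mk.injEq] at this
      exact Subtype.ext (Prod.ext (by linarith [this.1]) this.2)
    · rcases h with h | h
      · exact Or.inl (sierp_edge1 h)
      · exact Or.inr (sierp_edge1 h)

def sierpHom2 (n : ℕ) : sierpGraph (n + 1) →g sierpGraph (n + 2) where
  toFun u := ⟨(u.1.1, u.1.2 + 2 ^ n), sierp_mem2 u.2⟩
  map_rel' := by
    rintro u v ⟨hne, h⟩
    constructor
    · intro hh
      apply hne
      have := congrArg Subtype.val hh
      simp only [Prod.mk.injEq] at this
      exact Subtype.ext (Prod.ext this.1 (by linarith [this.2]))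
    · rcases h with h | h
      · exact Or.inl (sierp_edge2 h)
      · exact Or.inr (sierp_edge2 h)

/-! ### Lift lemmas -/

lemma sierp_lift0 (n : ℕ) {u v : {p : ℤ × ℤ // p ∈ sierpVerts (n + 1)}}
    {w w' : {p : ℤ × ℤ // p ∈ sierpVerts (n + 2)}} (hw : w.1 = u.1) (hw' : w'.1 = v.1) :
    (sierpGraph (n + 2)).edist w w' ≤ (sierpGraph (n + 1)).edist u v := by
  have h1 : w = sierpHom0 n u := Subtype.ext hw
  have h2 : w' = sierpHom0 n v := Subtype.ext hw'
  rw [h1, h2]; exact edist_map_le _ u v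

lemma sierp_lift1 (n : ℕ) {u v : {p : ℤ × ℤ // p ∈ sierpVerts (n + 1)}}
    {w w' : {p : ℤ × ℤ // p ∈ sierpVerts (n + 2)}} (hw : w.1 = (u.1.1 + 2 ^ n, u.1.2))
    (hw' : w'.1 = (v.1.1 + 2 ^ n, v.1.2)) :
    (sierpGraph (n + 2)).edist w w' ≤ (sierpGraph (n + 1)).edist u v := by
  have h1 : w = sierpHom1 n u := Subtype.ext hw
  have h2 : w' = sierpHom1 n v := Subtype.ext hw'
  rw [h1, h2]; exact edist_map_le _ u v

lemma sierp_lift2 (n : ℕ) {u v : {p : ℤ × ℤ // p ∈ sierpVerts (n + 1)}}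
    {w w' : {p : ℤ × ℤ // p ∈ sierpVerts (n + 2)}} (hw : w.1 = (u.1.1, u.1.2 + 2 ^ n))
    (hw' : w'.1 = (v.1.1, v.1.2 + 2 ^ n)) :
    (sierpGraph (n + 2)).edist w w' ≤ (sierpGraph (n + 1)).edist u v := by
  have h1 : w = sierpHom2 n u := Subtype.ext hw
  have h2 : w' = sierpHom2 n v := Subtype.ext hw'
  rw [h1, h2]; exact edist_map_le _ u v

lemma sierp_step (n : ℕ) {u c : {p : ℤ × ℤ // p ∈ sierpVerts (n + 2)}}
    (s : {p : ℤ × ℤ // p ∈ sierpVerts (n + 2)})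
    (h1 : (sierpGraph (n + 2)).edist u s ≤ 2 ^ n) (h2 : (sierpGraph (n + 2)).edist s c ≤ 2 ^ n) :
    (sierpGraph (n + 2)).edist u c ≤ 2 ^ (n + 1) := by
  calc (sierpGraph (n + 2)).edist u c
      ≤ (sierpGraph (n + 2)).edist u s + (sierpGraph (n + 2)).edist s c :=
        SimpleGraph.edist_triangle
    _ ≤ 2 ^ n + 2 ^ n := add_le_add h1 h2
    _ = 2 ^ (n + 1) := by rw [pow_succ, mul_two]

lemma sierp_base (u v : {p : ℤ × ℤ // p ∈ sierpVerts 1}) : (sierpGraph 1).edist u v ≤ 1 := by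
  rcases eq_or_ne u v with h | h
  · simp [h]
  · have : (sierpGraph 1).Adj u v := by revert h; revert u v; decide
    exact le_of_eq (SimpleGraph.edist_eq_one_iff_adj.mpr this)

lemma sierp_half_le (n : ℕ) : (2 : ℕ∞) ^ n ≤ 2 ^ (n + 1) := by
  rw [pow_succ, mul_two]; exact le_self_add

lemma sierp_corner_le : ∀ n, ∀ (u c : {p : ℤ × ℤ // p ∈ sierpVerts (n + 1)}),
    c.1 ∈ sierpCorners (n + 1) → (sierpGraph (n + 1)).edist u c ≤ 2 ^ n
  | 0 => fun u c _ => by simpa using sierp_base u c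
  | n + 1 => by
    intro u c hc
    have IH := sierp_corner_le n
    have hK00 : ((0, 0) : ℤ × ℤ) ∈ sierpCorners (n + 1) := by simp [sierpCorners]
    have hKX : ((2 ^ n, 0) : ℤ × ℤ) ∈ sierpCorners (n + 1) := by simp [sierpCorners]
    have hKY : ((0, 2 ^ n) : ℤ × ℤ) ∈ sierpCorners (n + 1) := by simp [sierpCorners]
    have hz : ((2 : ℤ)) ^ (n + 1) = 2 ^ n + 2 ^ n := by ring
    set c00 : {p : ℤ × ℤ // p ∈ sierpVerts (n + 1)} := ⟨(0, 0), sierp_mem00 n⟩ with hc00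
    set cX : {p : ℤ × ℤ // p ∈ sierpVerts (n + 1)} := ⟨(2 ^ n, 0), sierp_memX n⟩ with hcX
    set cY : {p : ℤ × ℤ // p ∈ sierpVerts (n + 1)} := ⟨(0, 2 ^ n), sierp_memY n⟩ with hcY
    set s01 : {p : ℤ × ℤ // p ∈ sierpVerts (n + 2)} := ⟨(2 ^ n, 0), sierp_mem0 (sierp_memX n)⟩
    set s02 : {p : ℤ × ℤ // p ∈ sierpVerts (n + 2)} := ⟨(0, 2 ^ n), sierp_mem0 (sierp_memY n)⟩
    set s12 : {p : ℤ × ℤ // p ∈ sierpVerts (n + 2)} := ⟨(2 ^ n, 2 ^ n), sierp_memXY n⟩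
    have hu := u.2
    simp only [sierpVerts, Finset.mem_union, Finset.mem_image] at hu
    simp only [sierpCorners, Nat.add_sub_cancel, Finset.mem_insert, Finset.mem_singleton] at hc
    rcases hc with hceq | hceq | hceq
    · -- c = (0,0)
      rcases hu with (hu | ⟨p, hp, hup⟩) | ⟨p, hp, hup⟩
      · exact le_trans (le_trans (sierp_lift0 n rfl hceq) (IH ⟨u.1, hu⟩ c00 hK00))
          (sierp_half_le n)
      · refine sierp_step n s01 ?_ ?_
        · exact le_trans (sierp_lift1 n hup.symm (by simp +zetaDelta)) (IH ⟨p, hp⟩ c00 hK00)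
        · exact le_trans (sierp_lift0 n rfl hceq) (IH cX c00 hK00)
      · refine sierp_step n s02 ?_ ?_
        · exact le_trans (sierp_lift2 n hup.symm (by simp +zetaDelta)) (IH ⟨p, hp⟩ c00 hK00)
        · exact le_trans (sierp_lift0 n rfl hceq) (IH cY c00 hK00)
    · -- c = (2^(n+1), 0)
      have hceq' : c.1 = ((2 : ℤ) ^ n + 2 ^ n, 0) := by rw [hceq, hz]
      rcases hu with (hu | ⟨p, hp, hup⟩) | ⟨p, hp, hup⟩
      · refine sierp_step n s01 ?_ ?_
        · exact le_trans (sierp_lift0 n rfl rfl) (IH ⟨u.1, hu⟩ cX hKX)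
        · exact le_trans (sierp_lift1 n (by simp +zetaDelta) hceq') (IH c00 cX hKX)
      · exact le_trans (le_trans (sierp_lift1 n hup.symm hceq') (IH ⟨p, hp⟩ cX hKX))
          (sierp_half_le n)
      · refine sierp_step n s12 ?_ ?_
        · exact le_trans (sierp_lift2 n hup.symm (by simp +zetaDelta)) (IH ⟨p, hp⟩ cX hKX)
        · exact le_trans (sierp_lift1 n (by simp +zetaDelta) hceq') (IH cY cX hKX)
    · -- c = (0, 2^(n+1))
      have hceq' : c.1 = ((0 : ℤ), (2 : ℤ) ^ n + 2 ^ n) := by rw [hceq, hz]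
      rcases hu with (hu | ⟨p, hp, hup⟩) | ⟨p, hp, hup⟩
      · refine sierp_step n s02 ?_ ?_
        · exact le_trans (sierp_lift0 n rfl rfl) (IH ⟨u.1, hu⟩ cY hKY)
        · exact le_trans (sierp_lift2 n (by simp +zetaDelta) hceq') (IH c00 cY hKY)
      · refine sierp_step n s12 ?_ ?_
        · exact le_trans (sierp_lift1 n hup.symm (by simp +zetaDelta)) (IH ⟨p, hp⟩ cY hKY)
        · exact le_trans (sierp_lift2 n (by simp +zetaDelta) hceq') (IH cX cY hKY)
      · exact le_trans (le_trans (sierp_lift2 n hup.symm hceq') (IH ⟨p, hp⟩ cY hKY))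
          (sierp_half_le n)

lemma sierp_edist_le : ∀ n, ∀ (u v : {p : ℤ × ℤ // p ∈ sierpVerts (n + 1)}),
    (sierpGraph (n + 1)).edist u v ≤ 2 ^ n
  | 0 => fun u v => by simpa using sierp_base u v
  | n + 1 => by
    intro u v
    have IH := sierp_edist_le n
    have IHc := sierp_corner_le n
    have hK00 : ((0, 0) : ℤ × ℤ) ∈ sierpCorners (n + 1) := by simp [sierpCorners]
    have hKX : ((2 ^ n, 0) : ℤ × ℤ) ∈ sierpCorners (n + 1) := by simp [sierpCorners]
    have hKY : ((0, 2 ^ n) : ℤ × ℤ) ∈ sierpCorners (n + 1) := by simp [sierpCorners]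
    set cX : {p : ℤ × ℤ // p ∈ sierpVerts (n + 1)} := ⟨(2 ^ n, 0), sierp_memX n⟩
    set cY : {p : ℤ × ℤ // p ∈ sierpVerts (n + 1)} := ⟨(0, 2 ^ n), sierp_memY n⟩
    set s01 : {p : ℤ × ℤ // p ∈ sierpVerts (n + 2)} := ⟨(2 ^ n, 0), sierp_mem0 (sierp_memX n)⟩
    set s02 : {p : ℤ × ℤ // p ∈ sierpVerts (n + 2)} := ⟨(0, 2 ^ n), sierp_mem0 (sierp_memY n)⟩
    set s12 : {p : ℤ × ℤ // p ∈ sierpVerts (n + 2)} := ⟨(2 ^ n, 2 ^ n), sierp_memXY n⟩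
    have hu := u.2
    have hv := v.2
    simp only [sierpVerts, Finset.mem_union, Finset.mem_image] at hu hv
    rcases hu with (hu | ⟨p, hp, hup⟩) | ⟨p, hp, hup⟩ <;>
      rcases hv with (hv | ⟨q, hq, hvq⟩) | ⟨q, hq, hvq⟩
    · exact le_trans (le_trans (sierp_lift0 n rfl rfl) (IH ⟨u.1, hu⟩ ⟨v.1, hv⟩)) (sierp_half_le n)
    · refine sierp_step n s01 ?_ ?_
      · exact le_trans (sierp_lift0 n rfl rfl) (IHc ⟨u.1, hu⟩ cX hKX)
      · rw [SimpleGraph.edist_comm]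
        exact le_trans (sierp_lift1 n hvq.symm (by simp +zetaDelta)) (IHc ⟨q, hq⟩ ⟨(0, 0), sierp_mem00 n⟩ hK00)
    · refine sierp_step n s02 ?_ ?_
      · exact le_trans (sierp_lift0 n rfl rfl) (IHc ⟨u.1, hu⟩ cY hKY)
      · rw [SimpleGraph.edist_comm]
        exact le_trans (sierp_lift2 n hvq.symm (by simp +zetaDelta)) (IHc ⟨q, hq⟩ ⟨(0, 0), sierp_mem00 n⟩ hK00)
    · refine sierp_step n s01 ?_ ?_
      · exact le_trans (sierp_lift1 n hup.symm (by simp +zetaDelta)) (IHc ⟨p, hp⟩ ⟨(0, 0), sierp_mem00 n⟩ hK00)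
      · rw [SimpleGraph.edist_comm]
        exact le_trans (sierp_lift0 n rfl rfl) (IHc ⟨v.1, hv⟩ cX hKX)
    · exact le_trans (le_trans (sierp_lift1 n hup.symm hvq.symm) (IH ⟨p, hp⟩ ⟨q, hq⟩)) (sierp_half_le n)
    · refine sierp_step n s12 ?_ ?_
      · exact le_trans (sierp_lift1 n hup.symm (by simp +zetaDelta)) (IHc ⟨p, hp⟩ cY hKY)
      · rw [SimpleGraph.edist_comm]
        exact le_trans (sierp_lift2 n hvq.symm (by simp +zetaDelta)) (IHc ⟨q, hq⟩ cX hKX)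
    · refine sierp_step n s02 ?_ ?_
      · exact le_trans (sierp_lift2 n hup.symm (by simp +zetaDelta)) (IHc ⟨p, hp⟩ ⟨(0, 0), sierp_mem00 n⟩ hK00)
      · rw [SimpleGraph.edist_comm]
        exact le_trans (sierp_lift0 n rfl rfl) (IHc ⟨v.1, hv⟩ cY hKY)
    · refine sierp_step n s12 ?_ ?_
      · exact le_trans (sierp_lift2 n hup.symm (by simp +zetaDelta)) (IHc ⟨p, hp⟩ cX hKX)
      · rw [SimpleGraph.edist_comm]
        exact le_trans (sierp_lift1 n hvq.symm (by simp +zetaDelta)) (IHc ⟨q, hq⟩ cY hKY)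
    · exact le_trans (le_trans (sierp_lift2 n hup.symm hvq.symm) (IH ⟨p, hp⟩ ⟨q, hq⟩)) (sierp_half_le n)

lemma sierp_edge_dx : ∀ n, ∀ e ∈ sierpEdges n, (e.1.1 - e.2.1).natAbs ≤ 1
  | 0 => by decide
  | 1 => by decide
  | n + 2 => by
    intro e he
    simp only [sierpEdges, Finset.mem_union, Finset.mem_image] at he
    rcases he with (he | ⟨f, hf, rfl⟩) | ⟨f, hf, rfl⟩
    · exact sierp_edge_dx (n + 1) e he
    · have := sierp_edge_dx (n + 1) f hf
      have h : f.1.1 + 2 ^ n - (f.2.1 + 2 ^ n) = f.1.1 - f.2.1 := by ring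
      simpa [h] using this
    · exact sierp_edge_dx (n + 1) f hf

lemma sierp_walk_dx {n : ℕ} {u v : {p : ℤ × ℤ // p ∈ sierpVerts n}}
    (w : (sierpGraph n).Walk u v) : (u.1.1 - v.1.1).natAbs ≤ w.length := by
  induction w with
  | nil => simp
  | @cons a b c h p ih =>
    have h1 : (a.1.1 - b.1.1).natAbs ≤ 1 := by
      rcases h.2 with he | he
      · exact sierp_edge_dx n _ he
      · have := sierp_edge_dx n _ he
        simp only at this
        omega
    have h3 : a.1.1 - c.1.1 = (a.1.1 - b.1.1) + (b.1.1 - c.1.1) := by ring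
    simp only [SimpleGraph.Walk.length_cons]
    calc (a.1.1 - c.1.1).natAbs ≤ (a.1.1 - b.1.1).natAbs + (b.1.1 - c.1.1).natAbs := by
          rw [h3]; exact Int.natAbs_add_le _ _
      _ ≤ 1 + p.length := add_le_add h1 ih
      _ = p.length + 1 := by omega


theorem sierp_diameter (n : ℕ) (hn : 1 ≤ n) :
    (sierpGraph n).diam = 2 ^ (n - 1) := by
  obtain ⟨m, rfl⟩ : ∃ m, n = m + 1 := ⟨n - 1, (Nat.succ_pred_eq_of_pos hn).symm⟩
  have hub : (sierpGraph (m + 1)).ediam ≤ (2 : ℕ∞) ^ m :=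
    SimpleGraph.ediam_le_of_edist_le (sierp_edist_le m)
  have hlow : ((2 ^ m : ℕ) : ℕ∞) ≤
      (sierpGraph (m + 1)).edist ⟨(0, 0), sierp_mem00 m⟩ ⟨(2 ^ m, 0), sierp_memX m⟩ := by
    rw [SimpleGraph.edist_eq_sInf]
    apply le_sInf
    rintro x ⟨w, rfl⟩
    have hw : ((0 : ℤ) - 2 ^ m).natAbs ≤ w.length := sierp_walk_dx w
    have hA : ((0 : ℤ) - 2 ^ m).natAbs = 2 ^ m := by
      rw [zero_sub, Int.natAbs_neg]
      simp [Int.natAbs_pow]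
    exact Nat.cast_le.mpr (by omega)
  have hlb : (2 : ℕ∞) ^ m ≤ (sierpGraph (m + 1)).ediam := by
    have h2 : (sierpGraph (m + 1)).edist (⟨(0, 0), sierp_mem00 m⟩ :
        {p : ℤ × ℤ // p ∈ sierpVerts (m + 1)}) ⟨(2 ^ m, 0), sierp_memX m⟩ ≤
        (sierpGraph (m + 1)).ediam := SimpleGraph.edist_le_ediam
    have := le_trans hlow h2
    exact le_trans (by push_cast; rfl) this
  have hed : (sierpGraph (m + 1)).ediam = (2 : ℕ∞) ^ m := le_antisymm hub hlb
  rw [SimpleGraph.diam, hed]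
  simp only [Nat.add_sub_cancel]
  rw [show (2 : ℕ∞) ^ m = ((2 ^ m : ℕ) : ℕ∞) by push_cast; rfl]
  exact ENat.toNat_coe _
end

section
/- In S_{n+1}, let β(i) be the number of vertices at graph distance i from a fixed corner vertex a. Then β(j + 2^{n-1}) = 2·β(j) for all 1 ≤ j ≤ 2^{n-1} - 1, and β(2^n) = 2·β(2^{n-1}) - 1. -/
namespace SierpAux

lemma verts_bounds : ∀ n : ℕ, ∀ p ∈ sierpVerts (n + 1),
    0 ≤ p.1 ∧ 0 ≤ p.2 ∧ p.1 + p.2 ≤ 2 ^ n := by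
  intro n
  induction n with
  | zero =>
    intro p hp
    simp only [sierpVerts, Finset.mem_insert, Finset.mem_singleton] at hp
    rcases hp with rfl | rfl | rfl <;> norm_num
  | succ k ih =>
    intro p hp
    simp only [sierpVerts, Finset.mem_union, Finset.mem_image] at hp
    have h2 : (2:ℤ)^(k+1) = 2^k + 2^k := by ring
    have hpos : (0:ℤ) < 2 ^ k := pow_pos (by norm_num) k
    rcases hp with (h | ⟨q, hq, rfl⟩) | ⟨q, hq, rfl⟩
    · obtain ⟨a, b, c⟩ := ih p h
      exact ⟨a, b, by linarith⟩
    · obtain ⟨a, b, c⟩ := ih q hq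
      exact ⟨by dsimp; linarith, b, by dsimp; linarith⟩
    · obtain ⟨a, b, c⟩ := ih q hq
      exact ⟨a, by dsimp; linarith, by dsimp; linarith⟩

lemma edge_shape : ∀ n : ℕ, ∀ e ∈ sierpEdges (n + 1),
    (e.2.1 = e.1.1 + 1 ∧ e.2.2 = e.1.2) ∨ (e.2.1 = e.1.1 ∧ e.2.2 = e.1.2 + 1) ∨
      (e.2.1 = e.1.1 - 1 ∧ e.2.2 = e.1.2 + 1) := by
  intro n
  induction n with
  | zero =>
    intro e he
    simp only [sierpEdges, Finset.mem_insert, Finset.mem_singleton] at he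
    rcases he with rfl | rfl | rfl <;> norm_num
  | succ k ih =>
    intro e he
    simp only [sierpEdges, Finset.mem_union, Finset.mem_image] at he
    rcases he with (h | ⟨f, hf, rfl⟩) | ⟨f, hf, rfl⟩
    · exact ih e h
    · rcases ih f hf with ⟨a, b⟩ | ⟨a, b⟩ | ⟨a, b⟩ <;> dsimp <;> omega
    · rcases ih f hf with ⟨a, b⟩ | ⟨a, b⟩ | ⟨a, b⟩ <;> dsimp <;> omega

lemma corner0_mem : ∀ n : ℕ, ((0:ℤ), (0:ℤ)) ∈ sierpVerts (n + 1) := by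
  intro n
  induction n with
  | zero => simp [sierpVerts]
  | succ k ih => simp only [sierpVerts, Finset.mem_union]; exact Or.inl (Or.inl ih)

lemma cornerX_mem : ∀ n : ℕ, ((2:ℤ) ^ n, (0:ℤ)) ∈ sierpVerts (n + 1) := by
  intro n
  induction n with
  | zero => simp [sierpVerts]
  | succ k ih =>
    simp only [sierpVerts, Finset.mem_union, Finset.mem_image]
    refine Or.inl (Or.inr ⟨(2 ^ k, 0), ih, ?_⟩)
    simp; ring

lemma cornerY_mem : ∀ n : ℕ, ((0:ℤ), (2:ℤ) ^ n) ∈ sierpVerts (n + 1) := by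
  intro n
  induction n with
  | zero => simp [sierpVerts]
  | succ k ih =>
    simp only [sierpVerts, Finset.mem_union, Finset.mem_image]
    refine Or.inr ⟨(0, 2 ^ k), ih, ?_⟩
    simp; ring

lemma verts_incl {n : ℕ} {p : ℤ × ℤ} (h : p ∈ sierpVerts (n + 1)) : p ∈ sierpVerts (n + 2) := by
  simp only [sierpVerts, Finset.mem_union]; exact Or.inl (Or.inl h)

lemma verts_shiftX {n : ℕ} {p : ℤ × ℤ} (h : p ∈ sierpVerts (n + 1)) :
    (p.1 + 2 ^ n, p.2) ∈ sierpVerts (n + 2) := by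
  simp only [sierpVerts, Finset.mem_union, Finset.mem_image]
  exact Or.inl (Or.inr ⟨p, h, rfl⟩)

lemma verts_shiftY {n : ℕ} {p : ℤ × ℤ} (h : p ∈ sierpVerts (n + 1)) :
    (p.1, p.2 + 2 ^ n) ∈ sierpVerts (n + 2) := by
  simp only [sierpVerts, Finset.mem_union, Finset.mem_image]
  exact Or.inr ⟨p, h, rfl⟩

lemma edges_incl {n : ℕ} {e : (ℤ × ℤ) × (ℤ × ℤ)} (h : e ∈ sierpEdges (n + 1)) :
    e ∈ sierpEdges (n + 2) := by
  simp only [sierpEdges, Finset.mem_union]; exact Or.inl (Or.inl h)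

lemma edges_shiftX {n : ℕ} {e : (ℤ × ℤ) × (ℤ × ℤ)} (h : e ∈ sierpEdges (n + 1)) :
    ((e.1.1 + 2 ^ n, e.1.2), (e.2.1 + 2 ^ n, e.2.2)) ∈ sierpEdges (n + 2) := by
  simp only [sierpEdges, Finset.mem_union, Finset.mem_image]
  exact Or.inl (Or.inr ⟨e, h, rfl⟩)

lemma edges_shiftY {n : ℕ} {e : (ℤ × ℤ) × (ℤ × ℤ)} (h : e ∈ sierpEdges (n + 1)) :
    ((e.1.1, e.1.2 + 2 ^ n), (e.2.1, e.2.2 + 2 ^ n)) ∈ sierpEdges (n + 2) := by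
  simp only [sierpEdges, Finset.mem_union, Finset.mem_image]
  exact Or.inr ⟨e, h, rfl⟩

/-- Inclusion as a graph hom `S_{n+1} → S_{n+2}`. -/
def inclHom (n : ℕ) : sierpGraph (n + 1) →g sierpGraph (n + 2) where
  toFun v := ⟨v.1, verts_incl v.2⟩
  map_rel' := by
    rintro ⟨u, hu⟩ ⟨v, hv⟩ ⟨h1, h2⟩
    refine ⟨by simp only [ne_eq, Subtype.mk.injEq] at h1 ⊢; exact h1, ?_⟩
    rcases h2 with h | h
    · exact Or.inl (edges_incl h)
    · exact Or.inr (edges_incl h)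

def shiftXHom (n : ℕ) : sierpGraph (n + 1) →g sierpGraph (n + 2) where
  toFun v := ⟨(v.1.1 + 2 ^ n, v.1.2), verts_shiftX v.2⟩
  map_rel' := by
    rintro ⟨u, hu⟩ ⟨v, hv⟩ ⟨h1, h2⟩
    refine ⟨?_, ?_⟩
    · simp only [ne_eq, Subtype.mk.injEq, Prod.mk.injEq, Prod.ext_iff] at h1 ⊢
      omega
    · rcases h2 with h | h
      · exact Or.inl (edges_shiftX (e := (u, v)) h)
      · exact Or.inr (edges_shiftX (e := (v, u)) h)

def shiftYHom (n : ℕ) : sierpGraph (n + 1) →g sierpGraph (n + 2) where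
  toFun v := ⟨(v.1.1, v.1.2 + 2 ^ n), verts_shiftY v.2⟩
  map_rel' := by
    rintro ⟨u, hu⟩ ⟨v, hv⟩ ⟨h1, h2⟩
    refine ⟨?_, ?_⟩
    · simp only [ne_eq, Subtype.mk.injEq, Prod.mk.injEq, Prod.ext_iff] at h1 ⊢
      omega
    · rcases h2 with h | h
      · exact Or.inl (edges_shiftY (e := (u, v)) h)
      · exact Or.inr (edges_shiftY (e := (v, u)) h)

open SimpleGraph

@[simp] lemma inclHom_coe (n : ℕ) (v) : ((inclHom n v : {p : ℤ × ℤ // p ∈ sierpVerts (n+2)}) : ℤ × ℤ) = v.1 := rfl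
@[simp] lemma shiftXHom_coe (n : ℕ) (v) :
    ((shiftXHom n v : {p : ℤ × ℤ // p ∈ sierpVerts (n+2)}) : ℤ × ℤ) = (v.1.1 + 2 ^ n, v.1.2) := rfl
@[simp] lemma shiftYHom_coe (n : ℕ) (v) :
    ((shiftYHom n v : {p : ℤ × ℤ // p ∈ sierpVerts (n+2)}) : ℤ × ℤ) = (v.1.1, v.1.2 + 2 ^ n) := rfl

lemma walk_bound {n : ℕ} {u v : {p : ℤ × ℤ // p ∈ sierpVerts (n + 1)}}
    (w : (sierpGraph (n + 1)).Walk u v) :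
    u.1.1 - w.length ≤ v.1.1 ∧ v.1.1 ≤ u.1.1 + w.length ∧
      u.1.2 - w.length ≤ v.1.2 ∧ v.1.2 ≤ u.1.2 + w.length ∧
      u.1.1 + u.1.2 - w.length ≤ v.1.1 + v.1.2 ∧ v.1.1 + v.1.2 ≤ u.1.1 + u.1.2 + w.length := by
  induction w with
  | nil => simp
  | @cons a b c h p ih =>
    obtain ⟨-, he⟩ := id h
    simp only [Walk.length_cons] at *
    push_cast at *
    rcases he with h | h <;>
      rcases edge_shape n _ h with ⟨h1, h2⟩ | ⟨h1, h2⟩ | ⟨h1, h2⟩ <;>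
      dsimp at h1 h2 <;>
      refine ⟨by linarith [ih.1], by linarith [ih.2.1], by linarith [ih.2.2.1],
        by linarith [ih.2.2.2.1], by linarith [ih.2.2.2.2.1], by linarith [ih.2.2.2.2.2]⟩

def c0 (n : ℕ) : {p : ℤ × ℤ // p ∈ sierpVerts (n + 1)} := ⟨(0, 0), corner0_mem n⟩
def cX (n : ℕ) : {p : ℤ × ℤ // p ∈ sierpVerts (n + 1)} := ⟨(2 ^ n, 0), cornerX_mem n⟩
def cY (n : ℕ) : {p : ℤ × ℤ // p ∈ sierpVerts (n + 1)} := ⟨(0, 2 ^ n), cornerY_mem n⟩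

@[simp] lemma c0_coe (n : ℕ) : ((c0 n : {p : ℤ × ℤ // p ∈ sierpVerts (n+1)}) : ℤ × ℤ) = (0, 0) := rfl
@[simp] lemma cX_coe (n : ℕ) : ((cX n : {p : ℤ × ℤ // p ∈ sierpVerts (n+1)}) : ℤ × ℤ) = (2 ^ n, 0) := rfl
@[simp] lemma cY_coe (n : ℕ) : ((cY n : {p : ℤ × ℤ // p ∈ sierpVerts (n+1)}) : ℤ × ℤ) = (0, 2 ^ n) := rfl

def wcopy {n : ℕ} {u v u' v' : {p : ℤ × ℤ // p ∈ sierpVerts n}}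
    (w : (sierpGraph n).Walk u v) (hu : u.1 = u'.1) (hv : v.1 = v'.1) :
    (sierpGraph n).Walk u' v' :=
  w.copy (Subtype.ext hu) (Subtype.ext hv)

@[simp] lemma wcopy_length {n : ℕ} {u v u' v' : {p : ℤ × ℤ // p ∈ sierpVerts n}}
    (w : (sierpGraph n).Walk u v) (hu : u.1 = u'.1) (hv : v.1 = v'.1) :
    (wcopy w hu hv).length = w.length := Walk.length_copy _ _ _

lemma adj1 (p q : ℤ × ℤ) (hp : p ∈ sierpVerts 1) (hq : q ∈ sierpVerts 1)
    (h : (p, q) ∈ sierpEdges 1 ∨ (q, p) ∈ sierpEdges 1) (hne : p ≠ q) :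
    (sierpGraph 1).Adj ⟨p, hp⟩ ⟨q, hq⟩ :=
  ⟨by simpa [Subtype.ext_iff] using hne, h⟩

lemma exists_walks : ∀ n : ℕ, ∀ v : {p : ℤ × ℤ // p ∈ sierpVerts (n + 1)},
    (∃ w : (sierpGraph (n + 1)).Walk (c0 n) v, (w.length : ℤ) = v.1.1 + v.1.2) ∧
      (∃ w : (sierpGraph (n + 1)).Walk (cX n) v, (w.length : ℤ) = 2 ^ n - v.1.1) ∧
      (∃ w : (sierpGraph (n + 1)).Walk (cY n) v, (w.length : ℤ) = 2 ^ n - v.1.2) := by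
  intro n
  induction n with
  | zero =>
    rintro ⟨p, hp⟩
    have e1 : ((0,0),(1,0)) ∈ sierpEdges 1 := by simp [sierpEdges]
    have e2 : ((0,0),(0,1)) ∈ sierpEdges 1 := by simp [sierpEdges]
    have e3 : ((1,0),(0,1)) ∈ sierpEdges 1 := by simp [sierpEdges]
    have m1 : ((0:ℤ),(0:ℤ)) ∈ sierpVerts 1 := corner0_mem 0
    have m2 : ((1:ℤ),(0:ℤ)) ∈ sierpVerts 1 := by simpa using cornerX_mem 0
    have m3 : ((0:ℤ),(1:ℤ)) ∈ sierpVerts 1 := by simpa using cornerY_mem 0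
    have hc0 : c0 0 = ⟨(0,0), m1⟩ := rfl
    have hcX : cX 0 = ⟨(1,0), m2⟩ := by apply Subtype.ext; norm_num [cX]
    have hcY : cY 0 = ⟨(0,1), m3⟩ := by apply Subtype.ext; norm_num [cY]
    have hp' : p = (0,0) ∨ p = (1,0) ∨ p = (0,1) := by
      simpa [sierpVerts] using hp
    rw [hcX, hcY]
    rcases hp' with rfl | rfl | rfl
    · exact ⟨⟨Walk.nil, rfl⟩,
        ⟨Walk.cons (adj1 _ _ m2 m1 (Or.inr e1) (by decide)) Walk.nil, by norm_num⟩,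
        ⟨Walk.cons (adj1 _ _ m3 m1 (Or.inr e2) (by decide)) Walk.nil, by norm_num⟩⟩
    · exact ⟨⟨Walk.cons (adj1 _ _ m1 m2 (Or.inl e1) (by decide)) Walk.nil, rfl⟩,
        ⟨Walk.nil, by norm_num⟩,
        ⟨Walk.cons (adj1 _ _ m3 m2 (Or.inr e3) (by decide)) Walk.nil, by norm_num⟩⟩
    · exact ⟨⟨Walk.cons (adj1 _ _ m1 m3 (Or.inl e2) (by decide)) Walk.nil, rfl⟩,
        ⟨Walk.cons (adj1 _ _ m2 m3 (Or.inl e3) (by decide)) Walk.nil, by norm_num⟩,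
        ⟨Walk.nil, by norm_num⟩⟩
  | succ k ih =>
    rintro ⟨p, hp⟩
    have h2 : (2:ℤ) ^ (k + 1) = 2 ^ k + 2 ^ k := by ring
    simp only [sierpVerts, Finset.mem_union, Finset.mem_image] at hp
    rcases hp with (hq | ⟨q, hq, rfl⟩) | ⟨q, hq, rfl⟩
    · -- p in the base copy
      obtain ⟨⟨w0, l0⟩, ⟨wX, lX⟩, ⟨wY, lY⟩⟩ := ih ⟨p, hq⟩
      obtain ⟨-, ⟨wa, la⟩, ⟨wb, lb⟩⟩ := ih (c0 k)
      refine ⟨⟨wcopy (w0.map (inclHom k)) rfl rfl, ?_⟩,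
        ⟨(wcopy (wa.map (shiftXHom k)) (by simp [cX, h2]) (by simp)).append
          (wcopy (wX.map (inclHom k)) (by simp [cX]) rfl :
            (sierpGraph (k+2)).Walk ⟨((2:ℤ)^k, 0), verts_incl (cornerX_mem k)⟩ ⟨p, verts_incl hq⟩), ?_⟩,
        ⟨(wcopy (wb.map (shiftYHom k)) (by simp [cY, h2]) (by simp)).append
          (wcopy (wY.map (inclHom k)) (by simp [cY]) rfl :
            (sierpGraph (k+2)).Walk ⟨((0:ℤ), (2:ℤ)^k), verts_incl (cornerY_mem k)⟩ ⟨p, verts_incl hq⟩), ?_⟩⟩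
      · erw [wcopy_length]
        simpa using l0
      · simp only [Walk.length_append, wcopy_length, Walk.length_map]
        erw [wcopy_length, wcopy_length, Walk.length_map, Walk.length_map]
        push_cast
        simp [c0] at la lX
        erw [la, lX]
        linarith
      · simp only [Walk.length_append, wcopy_length, Walk.length_map]
        erw [wcopy_length, wcopy_length, Walk.length_map, Walk.length_map]
        push_cast
        simp [c0] at lb lY
        erw [lb, lY]
        linarith
    · -- p in the X-shifted copy
      obtain ⟨⟨w0, l0⟩, ⟨wX, lX⟩, ⟨wY, lY⟩⟩ := ih ⟨q, hq⟩
      obtain ⟨⟨wa, la⟩, -, ⟨wb, lb⟩⟩ := ih (cX k)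
      refine ⟨⟨(wcopy (wa.map (inclHom k)) rfl rfl).append
          (wcopy (w0.map (shiftXHom k)) (by simp [cX, c0]) rfl :
            (sierpGraph (k+2)).Walk (inclHom k (cX k)) _), ?_⟩,
        ⟨wcopy (wX.map (shiftXHom k)) (by simp [cX, h2]) rfl, ?_⟩,
        ⟨(wcopy (wb.map (shiftYHom k)) (by simp [cY, cX, h2]) rfl).append
          (wcopy (wY.map (shiftXHom k)) (by simp [cY, cX]) rfl :
            (sierpGraph (k+2)).Walk _ _), ?_⟩⟩
      · simp only [Walk.length_append, wcopy_length, Walk.length_map]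
        erw [Walk.length_append, wcopy_length, wcopy_length, Walk.length_map, Walk.length_map]
        push_cast
        simp [cX, c0] at la l0
        erw [la, l0]
        linarith
      · erw [wcopy_length]
        simp only [wcopy_length, Walk.length_map]
        simp [cX] at lX ⊢
        linarith
      · simp only [Walk.length_append, wcopy_length, Walk.length_map]
        erw [Walk.length_append, wcopy_length, wcopy_length, Walk.length_map, Walk.length_map]
        push_cast
        simp [cX, cY] at lb lY ⊢
        linarith
    · -- p in the Y-shifted copy
      obtain ⟨⟨w0, l0⟩, ⟨wX, lX⟩, ⟨wY, lY⟩⟩ := ih ⟨q, hq⟩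
      obtain ⟨⟨wa, la⟩, ⟨wb, lb⟩, -⟩ := ih (cY k)
      refine ⟨⟨(wcopy (wa.map (inclHom k)) rfl rfl).append
          (wcopy (w0.map (shiftYHom k)) (by simp [cY, c0]) rfl :
            (sierpGraph (k+2)).Walk (inclHom k (cY k)) _), ?_⟩,
        ⟨(wcopy (wb.map (shiftXHom k)) (by simp [cX, cY, h2]) rfl).append
          (wcopy (wX.map (shiftYHom k)) (by simp [cX, cY]) rfl :
            (sierpGraph (k+2)).Walk _ _), ?_⟩,
        ⟨wcopy (wY.map (shiftYHom k)) (by simp [cY, h2]) rfl, ?_⟩⟩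
      · simp only [Walk.length_append, wcopy_length, Walk.length_map]
        erw [Walk.length_append, wcopy_length, wcopy_length, Walk.length_map, Walk.length_map]
        push_cast
        simp [cY, c0] at la l0
        erw [la, l0]
        linarith
      · simp only [Walk.length_append, wcopy_length, Walk.length_map]
        erw [Walk.length_append, wcopy_length, wcopy_length, Walk.length_map, Walk.length_map]
        push_cast
        simp [cX, cY] at lb lX ⊢
        linarith
      · erw [wcopy_length]
        simp only [wcopy_length, Walk.length_map]
        simp [cY] at lY ⊢
        linarith

lemma dist_c0 (n : ℕ) (v : {p : ℤ × ℤ // p ∈ sierpVerts (n + 1)}) :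
    ((sierpGraph (n + 1)).dist (c0 n) v : ℤ) = v.1.1 + v.1.2 := by
  obtain ⟨⟨w, hw⟩, -, -⟩ := exists_walks n v
  have h1 : (sierpGraph (n + 1)).dist (c0 n) v ≤ w.length := SimpleGraph.dist_le w
  obtain ⟨pth, hp⟩ := SimpleGraph.Reachable.exists_walk_length_eq_dist ⟨w⟩
  have h2 := (walk_bound pth).2.2.2.2.2
  rw [hp] at h2
  simp only [c0_coe] at h2
  have h1' : ((sierpGraph (n + 1)).dist (c0 n) v : ℤ) ≤ (w.length : ℤ) := by exact_mod_cast h1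
  apply le_antisymm <;> linarith

lemma dist_cX (n : ℕ) (v : {p : ℤ × ℤ // p ∈ sierpVerts (n + 1)}) :
    ((sierpGraph (n + 1)).dist (cX n) v : ℤ) = 2 ^ n - v.1.1 := by
  obtain ⟨-, ⟨w, hw⟩, -⟩ := exists_walks n v
  have h1 : (sierpGraph (n + 1)).dist (cX n) v ≤ w.length := SimpleGraph.dist_le w
  obtain ⟨pth, hp⟩ := SimpleGraph.Reachable.exists_walk_length_eq_dist ⟨w⟩
  have h2 := (walk_bound pth).1
  rw [hp] at h2
  simp only [cX_coe] at h2
  have h1' : ((sierpGraph (n + 1)).dist (cX n) v : ℤ) ≤ (w.length : ℤ) := by exact_mod_cast h1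
  apply le_antisymm <;> linarith

lemma dist_cY (n : ℕ) (v : {p : ℤ × ℤ // p ∈ sierpVerts (n + 1)}) :
    ((sierpGraph (n + 1)).dist (cY n) v : ℤ) = 2 ^ n - v.1.2 := by
  obtain ⟨-, -, ⟨w, hw⟩⟩ := exists_walks n v
  have h1 : (sierpGraph (n + 1)).dist (cY n) v ≤ w.length := SimpleGraph.dist_le w
  obtain ⟨pth, hp⟩ := SimpleGraph.Reachable.exists_walk_length_eq_dist ⟨w⟩
  have h2 := (walk_bound pth).2.2.1
  rw [hp] at h2
  simp only [cY_coe] at h2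
  have h1' : ((sierpGraph (n + 1)).dist (cY n) v : ℤ) ≤ (w.length : ℤ) := by exact_mod_cast h1
  apply le_antisymm <;> linarith

/-- Count of vertices on the antidiagonal `x + y = c`. -/
def D (m : ℕ) (c : ℤ) : ℕ := ((sierpVerts m).filter (fun p => p.1 + p.2 = c)).card
/-- Count of vertices on the column `x = c`. -/
def CX (m : ℕ) (c : ℤ) : ℕ := ((sierpVerts m).filter (fun p => p.1 = c)).card
/-- Count of vertices on the row `y = c`. -/
def CY (m : ℕ) (c : ℤ) : ℕ := ((sierpVerts m).filter (fun p => p.2 = c)).card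

lemma verts_decomp (k : ℕ) : sierpVerts (k + 2) =
    sierpVerts (k + 1) ∪
      (sierpVerts (k + 1)).image (fun p => (p.1 + 2 ^ k, p.2)) ∪
      (sierpVerts (k + 1)).image (fun p => (p.1, p.2 + 2 ^ k)) := rfl

lemma injX (k : ℕ) : Function.Injective (fun p : ℤ × ℤ => (p.1 + (2:ℤ) ^ k, p.2)) := by
  intro a b h
  simp only [Prod.mk.injEq, Prod.ext_iff] at h ⊢
  exact ⟨by linarith [h.1], h.2⟩

lemma injY (k : ℕ) : Function.Injective (fun p : ℤ × ℤ => (p.1, p.2 + (2:ℤ) ^ k)) := by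
  intro a b h
  simp only [Prod.mk.injEq, Prod.ext_iff] at h ⊢
  exact ⟨h.1, by linarith [h.2]⟩

lemma card_univ_filter {m : ℕ} (P : ℤ × ℤ → Prop) [DecidablePred P] :
    (Finset.univ.filter (fun u : {p : ℤ × ℤ // p ∈ sierpVerts m} => P u.1)).card
      = ((sierpVerts m).filter P).card := by
  apply Finset.card_bij (fun u _ => u.1)
  · intro a ha
    rw [Finset.mem_filter] at ha ⊢
    exact ⟨a.2, ha.2⟩
  · intro a ha b hb h
    exact Subtype.ext h
  · intro b hb
    rw [Finset.mem_filter] at hb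
    exact ⟨⟨b, hb.1⟩, by simp [hb.2], rfl⟩

lemma D_low (k : ℕ) (c : ℤ) (hc : c ≤ 2 ^ k) : D (k + 2) c = D (k + 1) c := by
  unfold D
  congr 1
  apply Finset.Subset.antisymm
  · intro p hp
    rw [Finset.mem_filter] at hp ⊢
    obtain ⟨hm, hc'⟩ := hp
    rw [verts_decomp, Finset.mem_union, Finset.mem_union] at hm
    rcases hm with (h | h) | h
    · exact ⟨h, hc'⟩
    · obtain ⟨q, hq, rfl⟩ := Finset.mem_image.mp h
      obtain ⟨a1, a2, a3⟩ := verts_bounds k q hq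
      dsimp at hc' ⊢
      have hq1 : q.1 = 0 := by linarith
      have hq2 : q.2 = 0 := by linarith
      refine ⟨?_, hc'⟩
      have : (q.1 + 2 ^ k, q.2) = ((2:ℤ) ^ k, (0:ℤ)) := by rw [hq1, hq2]; simp
      rw [this]
      exact cornerX_mem k
    · obtain ⟨q, hq, rfl⟩ := Finset.mem_image.mp h
      obtain ⟨a1, a2, a3⟩ := verts_bounds k q hq
      dsimp at hc' ⊢
      have hq1 : q.1 = 0 := by linarith
      have hq2 : q.2 = 0 := by linarith
      refine ⟨?_, hc'⟩
      have : (q.1, q.2 + 2 ^ k) = ((0:ℤ), (2:ℤ) ^ k) := by rw [hq1, hq2]; simp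
      rw [this]
      exact cornerY_mem k
  · intro p hp
    rw [Finset.mem_filter] at hp ⊢
    exact ⟨verts_incl hp.1, hp.2⟩

lemma D_high (k : ℕ) (c : ℤ) (h1 : 2 ^ k < c) (h2 : c < 2 ^ (k + 1)) :
    D (k + 2) c = 2 * D (k + 1) (c - 2 ^ k) := by
  have hpow : (2:ℤ) ^ (k + 1) = 2 ^ k + 2 ^ k := by ring
  unfold D
  rw [verts_decomp, Finset.filter_union, Finset.filter_union]
  have hA : (sierpVerts (k + 1)).filter (fun p => p.1 + p.2 = c) = ∅ := by
    rw [Finset.filter_eq_empty_iff]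
    intro p hp hc
    obtain ⟨a1, a2, a3⟩ := verts_bounds k p hp
    linarith
  rw [hA, Finset.empty_union, Finset.filter_image, Finset.filter_image]
  have e1 : ((sierpVerts (k + 1)).filter fun a => ((a.1 + 2 ^ k, a.2) : ℤ × ℤ).1 + (a.1 + 2 ^ k, a.2).2 = c)
      = (sierpVerts (k + 1)).filter fun p => p.1 + p.2 = c - 2 ^ k := by
    apply Finset.filter_congr
    intro p _
    dsimp
    constructor <;> intro h <;> linarith
  have e2 : ((sierpVerts (k + 1)).filter fun a => ((a.1, a.2 + 2 ^ k) : ℤ × ℤ).1 + (a.1, a.2 + 2 ^ k).2 = c)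
      = (sierpVerts (k + 1)).filter fun p => p.1 + p.2 = c - 2 ^ k := by
    apply Finset.filter_congr
    intro p _
    dsimp
    constructor <;> intro h <;> linarith
  rw [e1, e2]
  rw [Finset.card_union_of_disjoint, Finset.card_image_of_injective _ (injX k),
    Finset.card_image_of_injective _ (injY k)]
  · ring
  · rw [Finset.disjoint_left]
    rintro p hp hp'
    obtain ⟨q, hq, rfl⟩ := Finset.mem_image.mp hp
    obtain ⟨r, hr, hre⟩ := Finset.mem_image.mp hp'
    rw [Finset.mem_filter] at hq hr
    obtain ⟨b1, b2, b3⟩ := verts_bounds k q hq.1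
    obtain ⟨d1, d2, d3⟩ := verts_bounds k r hr.1
    have := hq.2
    have h5 : r.1 = q.1 + 2 ^ k ∧ r.2 + 2 ^ k = q.2 := by
      constructor <;> [exact (Prod.ext_iff.mp hre).1; exact (Prod.ext_iff.mp hre).2]
    linarith [h5.1, h5.2, hr.2]

lemma D_top (k : ℕ) : D (k + 2) (2 ^ (k + 1)) + 1 = 2 * D (k + 1) (2 ^ k) := by
  have hpow : (2:ℤ) ^ (k + 1) = 2 ^ k + 2 ^ k := by ring
  have hpos : (0:ℤ) < 2 ^ k := pow_pos (by norm_num) k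
  unfold D
  rw [verts_decomp, Finset.filter_union, Finset.filter_union]
  have hA : (sierpVerts (k + 1)).filter (fun p => p.1 + p.2 = 2 ^ (k + 1)) = ∅ := by
    rw [Finset.filter_eq_empty_iff]
    intro p hp hc
    obtain ⟨a1, a2, a3⟩ := verts_bounds k p hp
    linarith
  rw [hA, Finset.empty_union, Finset.filter_image, Finset.filter_image]
  have e1 : ((sierpVerts (k + 1)).filter fun a => ((a.1 + 2 ^ k, a.2) : ℤ × ℤ).1 + (a.1 + 2 ^ k, a.2).2 = 2 ^ (k + 1))
      = (sierpVerts (k + 1)).filter fun p => p.1 + p.2 = 2 ^ k := by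
    apply Finset.filter_congr
    intro p _
    dsimp
    constructor <;> intro h <;> linarith
  have e2 : ((sierpVerts (k + 1)).filter fun a => ((a.1, a.2 + 2 ^ k) : ℤ × ℤ).1 + (a.1, a.2 + 2 ^ k).2 = 2 ^ (k + 1))
      = (sierpVerts (k + 1)).filter fun p => p.1 + p.2 = 2 ^ k := by
    apply Finset.filter_congr
    intro p _
    dsimp
    constructor <;> intro h <;> linarith
  rw [e1, e2]
  have hinter :
      (((sierpVerts (k + 1)).filter fun p => p.1 + p.2 = 2 ^ k).image (fun p : ℤ × ℤ => (p.1 + 2 ^ k, p.2)))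
        ∩ (((sierpVerts (k + 1)).filter fun p => p.1 + p.2 = 2 ^ k).image (fun p : ℤ × ℤ => (p.1, p.2 + 2 ^ k)))
      = {((2:ℤ) ^ k, (2:ℤ) ^ k)} := by
    apply Finset.Subset.antisymm
    · intro p hp
      rw [Finset.mem_inter] at hp
      obtain ⟨q, hq, rfl⟩ := Finset.mem_image.mp hp.1
      obtain ⟨r, hr, hre⟩ := Finset.mem_image.mp hp.2
      rw [Finset.mem_filter] at hq hr
      obtain ⟨b1, b2, b3⟩ := verts_bounds k q hq.1
      obtain ⟨d1, d2, d3⟩ := verts_bounds k r hr.1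
      have h5 := (Prod.ext_iff.mp hre).1
      have h6 := (Prod.ext_iff.mp hre).2
      dsimp at h5 h6
      have hq1 : q.1 = 0 := by linarith [hq.2, hr.2]
      have hq2 : q.2 = 2 ^ k := by linarith [hq.2]
      rw [Finset.mem_singleton]
      rw [Prod.ext_iff]
      exact ⟨by dsimp; linarith, by dsimp; linarith⟩
    · rw [Finset.singleton_subset_iff, Finset.mem_inter]
      constructor
      · apply Finset.mem_image.mpr
        refine ⟨((0:ℤ), (2:ℤ) ^ k), ?_, by simp⟩
        rw [Finset.mem_filter]
        exact ⟨cornerY_mem k, by simp⟩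
      · apply Finset.mem_image.mpr
        refine ⟨((2:ℤ) ^ k, (0:ℤ)), ?_, by simp⟩
        rw [Finset.mem_filter]
        exact ⟨cornerX_mem k, by simp⟩
  have := Finset.card_union_add_card_inter
    (((sierpVerts (k + 1)).filter fun p => p.1 + p.2 = 2 ^ k).image (fun p : ℤ × ℤ => (p.1 + 2 ^ k, p.2)))
    (((sierpVerts (k + 1)).filter fun p => p.1 + p.2 = 2 ^ k).image (fun p : ℤ × ℤ => (p.1, p.2 + 2 ^ k)))
  rw [hinter, Finset.card_singleton, Finset.card_image_of_injective _ (injX k),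
    Finset.card_image_of_injective _ (injY k)] at this
  omega

lemma CX_mid (k : ℕ) (c : ℤ) (h0 : 0 < c) (hc : c < 2 ^ k) :
    CX (k + 2) c = 2 * CX (k + 1) c := by
  unfold CX
  rw [verts_decomp, Finset.filter_union, Finset.filter_union, Finset.filter_image,
    Finset.filter_image]
  have e1 : ((sierpVerts (k + 1)).filter fun a => ((a.1 + 2 ^ k, a.2) : ℤ × ℤ).1 = c) = ∅ := by
    rw [Finset.filter_eq_empty_iff]
    intro p hp hc'
    obtain ⟨a1, a2, a3⟩ := verts_bounds k p hp
    dsimp at hc'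
    linarith
  have e2 : ((sierpVerts (k + 1)).filter fun a => ((a.1, a.2 + 2 ^ k) : ℤ × ℤ).1 = c)
      = (sierpVerts (k + 1)).filter fun p => p.1 = c := by
    apply Finset.filter_congr
    intro p _
    dsimp
    exact Iff.rfl
  rw [e1, e2]
  simp only [Finset.image_empty, Finset.union_empty]
  rw [Finset.card_union_of_disjoint, Finset.card_image_of_injective _ (injY k)]
  · ring
  · rw [Finset.disjoint_left]
    rintro p hp hp'
    rw [Finset.mem_filter] at hp
    obtain ⟨q, hq, rfl⟩ := Finset.mem_image.mp hp'
    rw [Finset.mem_filter] at hq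
    obtain ⟨a1, a2, a3⟩ := verts_bounds k q hq.1
    obtain ⟨b1, b2, b3⟩ := verts_bounds k (q.1, q.2 + 2 ^ k) hp.1
    dsimp at b3
    have := hq.2
    linarith

lemma CX_high (k : ℕ) (c : ℤ) (hc : 2 ^ k < c) : CX (k + 2) c = CX (k + 1) (c - 2 ^ k) := by
  unfold CX
  rw [verts_decomp, Finset.filter_union, Finset.filter_union, Finset.filter_image,
    Finset.filter_image]
  have hA : (sierpVerts (k + 1)).filter (fun p : ℤ × ℤ => p.1 = c) = ∅ := by
    rw [Finset.filter_eq_empty_iff]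
    intro p hp hc'
    obtain ⟨a1, a2, a3⟩ := verts_bounds k p hp
    linarith
  have e1 : ((sierpVerts (k + 1)).filter fun a => ((a.1 + 2 ^ k, a.2) : ℤ × ℤ).1 = c)
      = (sierpVerts (k + 1)).filter fun p => p.1 = c - 2 ^ k := by
    apply Finset.filter_congr
    intro p _
    dsimp
    constructor <;> intro h <;> linarith
  rw [hA, e1]
  simp only [Finset.image_empty, Finset.union_empty, Finset.empty_union]
  exact Finset.card_image_of_injective _ (injX k)

lemma CX_midpoint (k : ℕ) : CX (k + 2) (2 ^ k) = CX (k + 1) 0 := by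
  have hpos : (0:ℤ) < 2 ^ k := pow_pos (by norm_num) k
  unfold CX
  have : (sierpVerts (k + 2)).filter (fun p : ℤ × ℤ => p.1 = 2 ^ k)
      = ((sierpVerts (k + 1)).filter (fun p : ℤ × ℤ => p.1 = 0)).image
          (fun p : ℤ × ℤ => (p.1 + 2 ^ k, p.2)) := by
    apply Finset.Subset.antisymm
    · intro p hp
      rw [Finset.mem_filter] at hp
      obtain ⟨hm, hc'⟩ := hp
      rw [verts_decomp, Finset.mem_union, Finset.mem_union] at hm
      rcases hm with (h | h) | h
      · obtain ⟨a1, a2, a3⟩ := verts_bounds k p h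
        have hp2 : p.2 = 0 := by linarith
        apply Finset.mem_image.mpr
        refine ⟨((0:ℤ), (0:ℤ)), by rw [Finset.mem_filter]; exact ⟨corner0_mem k, rfl⟩, ?_⟩
        rw [Prod.ext_iff]
        exact ⟨by dsimp; linarith, by dsimp; linarith⟩
      · obtain ⟨q, hq, rfl⟩ := Finset.mem_image.mp h
        dsimp at hc'
        apply Finset.mem_image.mpr
        refine ⟨q, by rw [Finset.mem_filter]; exact ⟨hq, by linarith⟩, rfl⟩
      · obtain ⟨q, hq, rfl⟩ := Finset.mem_image.mp h
        dsimp at hc'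
        obtain ⟨a1, a2, a3⟩ := verts_bounds k q hq
        have hq2 : q.2 = 0 := by linarith
        apply Finset.mem_image.mpr
        refine ⟨((0:ℤ), (2:ℤ) ^ k), by rw [Finset.mem_filter]; exact ⟨cornerY_mem k, rfl⟩, ?_⟩
        rw [Prod.ext_iff]
        exact ⟨by dsimp; linarith, by dsimp; linarith⟩
    · intro p hp
      obtain ⟨q, hq, rfl⟩ := Finset.mem_image.mp hp
      rw [Finset.mem_filter] at hq
      rw [Finset.mem_filter]
      constructor
      · exact verts_shiftX hq.1
      · dsimp; linarith [hq.2]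
  rw [this, Finset.card_image_of_injective _ (injX k)]

lemma CX_zero (k : ℕ) : CX (k + 2) 0 + 1 = 2 * CX (k + 1) 0 := by
  have hpos : (0:ℤ) < 2 ^ k := pow_pos (by norm_num) k
  unfold CX
  rw [verts_decomp, Finset.filter_union, Finset.filter_union, Finset.filter_image,
    Finset.filter_image]
  have e1 : ((sierpVerts (k + 1)).filter fun a => ((a.1 + 2 ^ k, a.2) : ℤ × ℤ).1 = 0) = ∅ := by
    rw [Finset.filter_eq_empty_iff]
    intro p hp hc'
    obtain ⟨a1, a2, a3⟩ := verts_bounds k p hp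
    dsimp at hc'
    linarith
  have e2 : ((sierpVerts (k + 1)).filter fun a => ((a.1, a.2 + 2 ^ k) : ℤ × ℤ).1 = 0)
      = (sierpVerts (k + 1)).filter fun p : ℤ × ℤ => p.1 = 0 := by
    apply Finset.filter_congr
    intro p _
    exact Iff.rfl
  rw [e1, e2]
  simp only [Finset.image_empty, Finset.union_empty]
  have hinter : ((sierpVerts (k + 1)).filter fun p : ℤ × ℤ => p.1 = 0)
      ∩ (((sierpVerts (k + 1)).filter fun p : ℤ × ℤ => p.1 = 0).image
          (fun p : ℤ × ℤ => (p.1, p.2 + 2 ^ k)))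
      = {((0:ℤ), (2:ℤ) ^ k)} := by
    apply Finset.Subset.antisymm
    · intro p hp
      rw [Finset.mem_inter] at hp
      rw [Finset.mem_filter] at hp
      obtain ⟨⟨hm, hx⟩, h2⟩ := hp
      obtain ⟨q, hq, rfl⟩ := Finset.mem_image.mp h2
      rw [Finset.mem_filter] at hq
      obtain ⟨a1, a2, a3⟩ := verts_bounds k q hq.1
      obtain ⟨b1, b2, b3⟩ := verts_bounds k (q.1, q.2 + 2 ^ k) hm
      dsimp at b3 hx
      rw [Finset.mem_singleton, Prod.ext_iff]
      have := hq.2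
      exact ⟨by dsimp; linarith, by dsimp; linarith⟩
    · rw [Finset.singleton_subset_iff, Finset.mem_inter]
      constructor
      · rw [Finset.mem_filter]
        exact ⟨cornerY_mem k, rfl⟩
      · apply Finset.mem_image.mpr
        refine ⟨((0:ℤ), (0:ℤ)), by rw [Finset.mem_filter]; exact ⟨corner0_mem k, rfl⟩, by simp⟩
  have := Finset.card_union_add_card_inter
    ((sierpVerts (k + 1)).filter fun p : ℤ × ℤ => p.1 = 0)
    (((sierpVerts (k + 1)).filter fun p : ℤ × ℤ => p.1 = 0).image
      (fun p : ℤ × ℤ => (p.1, p.2 + 2 ^ k)))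
  rw [hinter, Finset.card_singleton, Finset.card_image_of_injective _ (injY k)] at this
  omega

lemma verts_swap : ∀ m : ℕ, ∀ p : ℤ × ℤ, p ∈ sierpVerts (m + 1) → (p.2, p.1) ∈ sierpVerts (m + 1) := by
  intro m
  induction m with
  | zero =>
    intro p hp
    simp only [sierpVerts, Finset.mem_insert, Finset.mem_singleton] at hp ⊢
    rcases hp with rfl | rfl | rfl <;> simp
  | succ k ih =>
    intro p hp
    simp only [sierpVerts, Finset.mem_union, Finset.mem_image] at hp ⊢
    rcases hp with (h | ⟨q, hq, rfl⟩) | ⟨q, hq, rfl⟩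
    · exact Or.inl (Or.inl (ih p h))
    · exact Or.inr ⟨(q.2, q.1), ih q hq, rfl⟩
    · exact Or.inl (Or.inr ⟨(q.2, q.1), ih q hq, rfl⟩)

lemma CY_eq_CX (m : ℕ) (c : ℤ) : CY (m + 1) c = CX (m + 1) c := by
  unfold CY CX
  apply Finset.card_bij (fun p _ => ((p.2, p.1) : ℤ × ℤ))
  · intro a ha
    rw [Finset.mem_filter] at ha ⊢
    exact ⟨verts_swap m a ha.1, ha.2⟩
  · intro a ha b hb h
    rw [Prod.ext_iff] at h
    obtain ⟨h1, h2⟩ := h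
    exact Prod.ext h2 h1
  · intro b hb
    rw [Finset.mem_filter] at hb
    exact ⟨(b.2, b.1), by rw [Finset.mem_filter]; exact ⟨verts_swap m b hb.1, hb.2⟩, rfl⟩

lemma count_c0 (m : ℕ) (i : ℕ) :
    (Finset.univ.filter fun u : {p : ℤ × ℤ // p ∈ sierpVerts (m + 1)} =>
        (sierpGraph (m + 1)).dist (c0 m) u = i).card = D (m + 1) (i : ℤ) := by
  have h : ∀ u : {p : ℤ × ℤ // p ∈ sierpVerts (m + 1)},
      ((sierpGraph (m + 1)).dist (c0 m) u = i) ↔ (u.1.1 + u.1.2 = (i : ℤ)) := by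
    intro u
    rw [← dist_c0 m u]
    exact (Nat.cast_inj (R := ℤ)).symm
  rw [Finset.filter_congr (fun u _ => h u)]
  exact card_univ_filter (fun p : ℤ × ℤ => p.1 + p.2 = (i : ℤ))

lemma count_cX (m : ℕ) (i : ℕ) :
    (Finset.univ.filter fun u : {p : ℤ × ℤ // p ∈ sierpVerts (m + 1)} =>
        (sierpGraph (m + 1)).dist (cX m) u = i).card = CX (m + 1) (2 ^ m - (i : ℤ)) := by
  have h : ∀ u : {p : ℤ × ℤ // p ∈ sierpVerts (m + 1)},
      ((sierpGraph (m + 1)).dist (cX m) u = i) ↔ (u.1.1 = 2 ^ m - (i : ℤ)) := by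
    intro u
    have hd := dist_cX m u
    constructor
    · intro he
      rw [he] at hd
      linarith
    · intro he
      rw [he] at hd
      have : (((sierpGraph (m + 1)).dist (cX m) u : ℕ) : ℤ) = (i : ℤ) := by linarith
      exact_mod_cast this
  rw [Finset.filter_congr (fun u _ => h u)]
  exact card_univ_filter (fun p : ℤ × ℤ => p.1 = 2 ^ m - (i : ℤ))

lemma count_cY (m : ℕ) (i : ℕ) :
    (Finset.univ.filter fun u : {p : ℤ × ℤ // p ∈ sierpVerts (m + 1)} =>
        (sierpGraph (m + 1)).dist (cY m) u = i).card = CY (m + 1) (2 ^ m - (i : ℤ)) := by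
  have h : ∀ u : {p : ℤ × ℤ // p ∈ sierpVerts (m + 1)},
      ((sierpGraph (m + 1)).dist (cY m) u = i) ↔ (u.1.2 = 2 ^ m - (i : ℤ)) := by
    intro u
    have hd := dist_cY m u
    constructor
    · intro he
      rw [he] at hd
      linarith
    · intro he
      rw [he] at hd
      have : (((sierpGraph (m + 1)).dist (cY m) u : ℕ) : ℤ) = (i : ℤ) := by linarith
      exact_mod_cast this
  rw [Finset.filter_congr (fun u _ => h u)]
  exact card_univ_filter (fun p : ℤ × ℤ => p.2 = 2 ^ m - (i : ℤ))

end SierpAux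

theorem sierp_beta_recursion (n : ℕ) (hn : 1 ≤ n)
    (a : {p : ℤ × ℤ // p ∈ sierpVerts (n + 1)}) (ha : a.1 ∈ sierpCorners (n + 1)) :
    (∀ j, 1 ≤ j → j ≤ 2 ^ (n - 1) - 1 →
      (Finset.univ.filter fun u => (sierpGraph (n + 1)).dist a u = j + 2 ^ (n - 1)).card =
        2 * (Finset.univ.filter fun u => (sierpGraph (n + 1)).dist a u = j).card) ∧
    (Finset.univ.filter fun u => (sierpGraph (n + 1)).dist a u = 2 ^ n).card + 1 =
      2 * (Finset.univ.filter fun u => (sierpGraph (n + 1)).dist a u = 2 ^ (n - 1)).card := by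
  obtain ⟨k, rfl⟩ : ∃ k, n = k + 1 := ⟨n - 1, by omega⟩
  have hkk : k + 1 - 1 = k := by omega
  have hk1 : k + 1 + 1 - 1 = k + 1 := by omega
  have hposN : 1 ≤ 2 ^ k := Nat.one_le_two_pow
  have hposZ : (0 : ℤ) < 2 ^ k := by positivity
  rw [hkk]
  simp only [sierpCorners, hk1, Finset.mem_insert, Finset.mem_singleton] at ha
  rcases ha with h | h | h
  · have ha' : a = SierpAux.c0 (k + 1) := Subtype.ext h
    subst ha'
    constructor
    · intro j hj1 hj2
      have hj2' : j < 2 ^ k := by omega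
      have hjz1 : (0 : ℤ) < (j : ℤ) := by exact_mod_cast hj1
      have hjz2 : (j : ℤ) < 2 ^ k := by exact_mod_cast hj2'
      have hps : (2 : ℤ) ^ (k + 1) = 2 ^ k + 2 ^ k := by ring
      rw [SierpAux.count_c0, SierpAux.count_c0]
      push_cast
      rw [SierpAux.D_high k _ (by linarith) (by linarith),
        SierpAux.D_low k _ (by linarith)]
      congr 1
      congr 1
      ring
    · rw [SierpAux.count_c0, SierpAux.count_c0]
      push_cast
      rw [SierpAux.D_top k, SierpAux.D_low k _ le_rfl]
  · have ha' : a = SierpAux.cX (k + 1) := Subtype.ext (by rw [h]; norm_num [SierpAux.cX])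
    subst ha'
    constructor
    · intro j hj1 hj2
      have hj2' : j < 2 ^ k := by omega
      have hjz1 : (0 : ℤ) < (j : ℤ) := by exact_mod_cast hj1
      have hjz2 : (j : ℤ) < 2 ^ k := by exact_mod_cast hj2'
      have hps : (2 : ℤ) ^ (k + 1) = 2 ^ k + 2 ^ k := by ring
      rw [SierpAux.count_cX, SierpAux.count_cX]
      have e1 : (2 : ℤ) ^ (k + 1) - ((j + 2 ^ k : ℕ) : ℤ) = 2 ^ k - (j : ℤ) := by
        push_cast
        ring
      rw [e1, SierpAux.CX_mid k _ (by linarith) (by linarith),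
        SierpAux.CX_high k _ (by linarith)]
      congr 1
      congr 1
      push_cast
      ring
    · rw [SierpAux.count_cX, SierpAux.count_cX]
      have e1 : (2 : ℤ) ^ (k + 1) - ((2 ^ (k + 1) : ℕ) : ℤ) = 0 := by push_cast; ring
      have e2 : (2 : ℤ) ^ (k + 1) - ((2 ^ k : ℕ) : ℤ) = 2 ^ k := by push_cast; ring
      rw [e1, e2, SierpAux.CX_zero k, SierpAux.CX_midpoint k]
  · have ha' : a = SierpAux.cY (k + 1) := Subtype.ext (by rw [h]; norm_num [SierpAux.cY])
    subst ha'
    constructor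
    · intro j hj1 hj2
      have hj2' : j < 2 ^ k := by omega
      have hjz1 : (0 : ℤ) < (j : ℤ) := by exact_mod_cast hj1
      have hjz2 : (j : ℤ) < 2 ^ k := by exact_mod_cast hj2'
      have hps : (2 : ℤ) ^ (k + 1) = 2 ^ k + 2 ^ k := by ring
      rw [SierpAux.count_cY, SierpAux.count_cY, SierpAux.CY_eq_CX, SierpAux.CY_eq_CX]
      have e1 : (2 : ℤ) ^ (k + 1) - ((j + 2 ^ k : ℕ) : ℤ) = 2 ^ k - (j : ℤ) := by
        push_cast
        ring
      rw [e1, SierpAux.CX_mid k _ (by linarith) (by linarith),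
        SierpAux.CX_high k _ (by linarith)]
      congr 1
      congr 1
      push_cast
      ring
    · rw [SierpAux.count_cY, SierpAux.count_cY, SierpAux.CY_eq_CX, SierpAux.CY_eq_CX]
      have e1 : (2 : ℤ) ^ (k + 1) - ((2 ^ (k + 1) : ℕ) : ℤ) = 0 := by push_cast; ring
      have e2 : (2 : ℤ) ^ (k + 1) - ((2 ^ k : ℕ) : ℤ) = 2 ^ k := by push_cast; ring
      rw [e1, e2, SierpAux.CX_zero k, SierpAux.CX_midpoint k]
end

section
/- Define the stacking sum of S_n at a corner vertex a by T(n) = ∑_{u ∈ V(S_n)} 2^{d(u,a)}, where d is graph distance. Then T(n+1) = T(n) + 2·2^{2^{n-1}}·(T(n) − 1) − 2^{2^n} for all n ≥ 1. -/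
namespace SierpAux

open SimpleGraph Finset

abbrev VV (m : ℕ) := {p : ℤ × ℤ // p ∈ sierpVerts m}

lemma mem_succ_iff {n : ℕ} {p : ℤ × ℤ} : p ∈ sierpVerts (n+2) ↔
    p ∈ sierpVerts (n+1) ∨ (∃ q ∈ sierpVerts (n+1), (q.1 + 2^n, q.2) = p) ∨
      (∃ q ∈ sierpVerts (n+1), (q.1, q.2 + 2^n) = p) := by
  show p ∈ _ ∪ _ ∪ _ ↔ _
  simp only [Finset.mem_union, Finset.mem_image, or_assoc]

lemma edges_mem_succ {n : ℕ} {e : (ℤ×ℤ) × (ℤ×ℤ)} :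
    e ∈ sierpEdges (n+2) ↔ e ∈ sierpEdges (n+1) ∨
      (∃ d ∈ sierpEdges (n+1), ((d.1.1 + 2 ^ n, d.1.2), (d.2.1 + 2 ^ n, d.2.2)) = e) ∨
      (∃ d ∈ sierpEdges (n+1), ((d.1.1, d.1.2 + 2 ^ n), (d.2.1, d.2.2 + 2 ^ n)) = e) := by
  show e ∈ _ ∪ _ ∪ _ ↔ _
  simp only [Finset.mem_union, Finset.mem_image, or_assoc]

lemma vert_bounds : ∀ n : ℕ, ∀ p ∈ sierpVerts (n+1), 0 ≤ p.1 ∧ 0 ≤ p.2 ∧ p.1 + p.2 ≤ 2^n := by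
  intro n
  induction n with
  | zero => decide
  | succ n ih =>
    intro p hp
    have h2 : (0:ℤ) < 2^n := by positivity
    rcases mem_succ_iff.mp hp with h | ⟨q, hq, rfl⟩ | ⟨q, hq, rfl⟩ <;>
      [skip; skip; skip]
    · obtain ⟨a, b, c⟩ := ih p h
      refine ⟨a, b, by rw [pow_succ]; linarith⟩
    · obtain ⟨a, b, c⟩ := ih q hq
      exact ⟨by simpa using by linarith, by simpa using b, by simp; rw [pow_succ]; linarith⟩
    · obtain ⟨a, b, c⟩ := ih q hq
      exact ⟨by simpa using a, by simpa using by linarith, by simp; rw [pow_succ]; linarith⟩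

lemma c0_mem (n : ℕ) : ((0:ℤ), (0:ℤ)) ∈ sierpVerts (n+1) := by
  induction n with
  | zero => decide
  | succ n ih => exact mem_succ_iff.mpr (Or.inl ih)

lemma c1_mem (n : ℕ) : (((2:ℤ)^n), (0:ℤ)) ∈ sierpVerts (n+1) := by
  induction n with
  | zero => decide
  | succ n ih =>
    refine mem_succ_iff.mpr (Or.inr (Or.inl ⟨((2:ℤ)^n, 0), ih, ?_⟩))
    simp [Prod.ext_iff]; ring

lemma c2_mem (n : ℕ) : ((0:ℤ), ((2:ℤ)^n)) ∈ sierpVerts (n+1) := by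
  induction n with
  | zero => decide
  | succ n ih =>
    refine mem_succ_iff.mpr (Or.inr (Or.inr ⟨(0, (2:ℤ)^n), ih, ?_⟩))
    simp [Prod.ext_iff]; ring

def K0 (n : ℕ) : VV (n+1) := ⟨(0,0), c0_mem n⟩
def K1 (n : ℕ) : VV (n+1) := ⟨((2:ℤ)^n, 0), c1_mem n⟩
def K2 (n : ℕ) : VV (n+1) := ⟨(0, (2:ℤ)^n), c2_mem n⟩

lemma edge_diff : ∀ n : ℕ, ∀ e ∈ sierpEdges (n+1),
    (e.2.1 - e.1.1 = 1 ∧ e.2.2 - e.1.2 = 0) ∨ (e.2.1 - e.1.1 = 0 ∧ e.2.2 - e.1.2 = 1) ∨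
      (e.2.1 - e.1.1 = -1 ∧ e.2.2 - e.1.2 = 1) := by
  intro n
  induction n with
  | zero => decide
  | succ n ih =>
    intro e he
    rcases edges_mem_succ.mp he with h | ⟨d, hd, rfl⟩ | ⟨d, hd, rfl⟩
    · exact ih e h
    · rcases ih d hd with ⟨a, b⟩ | ⟨a, b⟩ | ⟨a, b⟩ <;> simp <;> omega
    · rcases ih d hd with ⟨a, b⟩ | ⟨a, b⟩ | ⟨a, b⟩ <;> simp <;> omega


lemma subtype_ne {m : ℕ} {u v : VV m} (h : u ≠ v) : u.1 ≠ v.1 :=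
  fun hh => h (Subtype.ext hh)

/-- Inclusion homomorphism (copy 1). -/
def homInc (n : ℕ) : sierpGraph (n+1) →g sierpGraph (n+2) where
  toFun u := ⟨u.1, mem_succ_iff.mpr (Or.inl u.2)⟩
  map_rel' := by
    rintro u v ⟨hne, he⟩
    refine ⟨fun h => hne (Subtype.ext (by have h' := congrArg Subtype.val h; exact h')), ?_⟩
    rcases he with h | h
    · exact Or.inl (edges_mem_succ.mpr (Or.inl h))
    · exact Or.inr (edges_mem_succ.mpr (Or.inl h))

/-- Shift-x homomorphism (copy 2). -/
def homX (n : ℕ) : sierpGraph (n+1) →g sierpGraph (n+2) where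
  toFun u := ⟨(u.1.1 + 2^n, u.1.2), mem_succ_iff.mpr (Or.inr (Or.inl ⟨u.1, u.2, rfl⟩))⟩
  map_rel' := by
    rintro u v ⟨hne, he⟩
    have hne' := subtype_ne hne
    refine ⟨fun h => hne' ?_, ?_⟩
    · have := Subtype.ext_iff.mp h
      simp only [Prod.ext_iff] at this ⊢
      exact ⟨by linarith [this.1], this.2⟩
    rcases he with h | h
    · exact Or.inl (edges_mem_succ.mpr (Or.inr (Or.inl ⟨(u.1, v.1), h, rfl⟩)))
    · exact Or.inr (edges_mem_succ.mpr (Or.inr (Or.inl ⟨(v.1, u.1), h, rfl⟩)))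

/-- Shift-y homomorphism (copy 3). -/
def homY (n : ℕ) : sierpGraph (n+1) →g sierpGraph (n+2) where
  toFun u := ⟨(u.1.1, u.1.2 + 2^n), mem_succ_iff.mpr (Or.inr (Or.inr ⟨u.1, u.2, rfl⟩))⟩
  map_rel' := by
    rintro u v ⟨hne, he⟩
    have hne' := subtype_ne hne
    refine ⟨fun h => hne' ?_, ?_⟩
    · have := Subtype.ext_iff.mp h
      simp only [Prod.ext_iff] at this ⊢
      exact ⟨this.1, by linarith [this.2]⟩
    rcases he with h | h
    · exact Or.inl (edges_mem_succ.mpr (Or.inr (Or.inr ⟨(u.1, v.1), h, rfl⟩)))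
    · exact Or.inr (edges_mem_succ.mpr (Or.inr (Or.inr ⟨(v.1, u.1), h, rfl⟩)))

section WalkHelpers

variable {V W : Type*} {G : SimpleGraph V} {H : SimpleGraph W}

lemma exW_congr {u u' v v' : V} {k : ℤ} (hu : u = u') (hv : v = v')
    (h : ∃ p : G.Walk u v, (p.length : ℤ) = k) : ∃ p : G.Walk u' v', (p.length : ℤ) = k := by
  subst hu; subst hv; exact h

lemma exW_map (f : G →g H) {u v : V} {k : ℤ}
    (h : ∃ p : G.Walk u v, (p.length : ℤ) = k) :
    ∃ p : H.Walk (f u) (f v), (p.length : ℤ) = k := by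
  obtain ⟨p, hp⟩ := h
  exact ⟨p.map f, by simpa using hp⟩

lemma exW_trans {u v w : V} {j k : ℤ}
    (h1 : ∃ p : G.Walk u v, (p.length : ℤ) = j)
    (h2 : ∃ p : G.Walk v w, (p.length : ℤ) = k) :
    ∃ p : G.Walk u w, (p.length : ℤ) = j + k := by
  obtain ⟨p, hp⟩ := h1; obtain ⟨q, hq⟩ := h2
  exact ⟨p.append q, by rw [SimpleGraph.Walk.length_append]; push_cast; omega⟩

lemma exW_len {u v : V} {j k : ℤ} (h : ∃ p : G.Walk u v, (p.length : ℤ) = j)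
    (hjk : j = k) : ∃ p : G.Walk u v, (p.length : ℤ) = k := hjk ▸ h

end WalkHelpers

lemma ub : ∀ n : ℕ, ∀ u : VV (n+1),
    (∃ p : (sierpGraph (n+1)).Walk u (K0 n), (p.length : ℤ) = u.1.1 + u.1.2) ∧
    (∃ p : (sierpGraph (n+1)).Walk u (K1 n), (p.length : ℤ) = 2^n - u.1.1) ∧
    (∃ p : (sierpGraph (n+1)).Walk u (K2 n), (p.length : ℤ) = 2^n - u.1.2) := by
  intro n
  induction n with
  | zero =>
    intro u
    have adj01 : (sierpGraph 1).Adj (K0 0) (K1 0) := by decide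
    have adj02 : (sierpGraph 1).Adj (K0 0) (K2 0) := by decide
    have adj12 : (sierpGraph 1).Adj (K1 0) (K2 0) := by decide
    obtain ⟨p, hp⟩ := u
    have hmem : p = (0,0) ∨ p = (1,0) ∨ p = (0,1) := by
      have := hp
      rw [show sierpVerts 1 = {(0,0),(1,0),(0,1)} from rfl] at this
      simpa using this
    rcases hmem with rfl | rfl | rfl
    · exact ⟨⟨SimpleGraph.Walk.nil, by rfl⟩,
        ⟨SimpleGraph.Walk.cons adj01 SimpleGraph.Walk.nil, by rfl⟩,
        ⟨SimpleGraph.Walk.cons adj02 SimpleGraph.Walk.nil, by rfl⟩⟩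
    · exact ⟨⟨SimpleGraph.Walk.cons adj01.symm SimpleGraph.Walk.nil, by rfl⟩,
        ⟨SimpleGraph.Walk.nil, by rfl⟩,
        ⟨SimpleGraph.Walk.cons adj12 SimpleGraph.Walk.nil, by rfl⟩⟩
    · exact ⟨⟨SimpleGraph.Walk.cons adj02.symm SimpleGraph.Walk.nil, by rfl⟩,
        ⟨SimpleGraph.Walk.cons adj12.symm SimpleGraph.Walk.nil, by rfl⟩,
        ⟨SimpleGraph.Walk.nil, by rfl⟩⟩
  | succ n ih =>
    intro u
    have e0 : homInc n (K0 n) = K0 (n+1) := Subtype.ext rfl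
    have eXK0 : homX n (K0 n) = homInc n (K1 n) := Subtype.ext (show ((0:ℤ) + 2^n, (0:ℤ)) = ((2:ℤ)^n, (0:ℤ)) by norm_num)
    have eXK1 : homX n (K1 n) = K1 (n+1) := Subtype.ext (show ((2:ℤ)^n + 2^n, (0:ℤ)) = ((2:ℤ)^(n+1), (0:ℤ)) by rw [Prod.mk.injEq]; constructor <;> ring)
    have eXK2Y : homX n (K2 n) = homY n (K1 n) := Subtype.ext (show ((0:ℤ) + 2^n, (2:ℤ)^n) = ((2:ℤ)^n, (0:ℤ)+2^n) by norm_num)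
    have eYK0 : homY n (K0 n) = homInc n (K2 n) := Subtype.ext (show ((0:ℤ), (0:ℤ) + 2^n) = ((0:ℤ), (2:ℤ)^n) by norm_num)
    have eYK2 : homY n (K2 n) = K2 (n+1) := Subtype.ext (show ((0:ℤ), (2:ℤ)^n + 2^n) = ((0:ℤ), (2:ℤ)^(n+1)) by rw [Prod.mk.injEq]; constructor <;> ring)
    rcases mem_succ_iff.mp u.2 with h | ⟨q, hq, hEq⟩ | ⟨q, hq, hEq⟩
    · -- copy 1
      set u' : VV (n+1) := ⟨u.1, h⟩ with hu'def
      have hu' : homInc n u' = u := Subtype.ext rfl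
      obtain ⟨h0, h1, h2⟩ := ih u'
      refine ⟨?_, ?_, ?_⟩
      · exact exW_congr hu' e0 (exW_map (homInc n) h0)
      · refine exW_len (exW_trans (exW_congr hu' rfl (exW_map (homInc n) h1))
          (exW_congr eXK0 eXK1 (exW_map (homX n) (ih (K0 n)).2.1))) ?_
        show (2:ℤ)^n - u.1.1 + (2^n - (0:ℤ)) = 2^(n+1) - u.1.1
        rw [pow_succ]; ring
      · refine exW_len (exW_trans (exW_congr hu' rfl (exW_map (homInc n) h2))
          (exW_congr eYK0 eYK2 (exW_map (homY n) (ih (K0 n)).2.2))) ?_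
        show (2:ℤ)^n - u.1.2 + (2^n - (0:ℤ)) = 2^(n+1) - u.1.2
        rw [pow_succ]; ring
    · -- copy 2
      set u' : VV (n+1) := ⟨q, hq⟩ with hu'def
      have hu' : homX n u' = u := Subtype.ext hEq
      have hx : u.1.1 = q.1 + 2^n := by rw [← hEq]
      have hy : u.1.2 = q.2 := by rw [← hEq]
      obtain ⟨h0, h1, h2⟩ := ih u'
      refine ⟨?_, ?_, ?_⟩
      · refine exW_len (exW_trans (exW_congr hu' eXK0 (exW_map (homX n) h0))
          (exW_congr rfl e0 (exW_map (homInc n) (ih (K1 n)).1))) ?_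
        show q.1 + q.2 + ((2:ℤ)^n + (0:ℤ)) = u.1.1 + u.1.2
        rw [hx, hy]; ring
      · refine exW_len (exW_congr hu' eXK1 (exW_map (homX n) h1)) ?_
        show (2:ℤ)^n - q.1 = 2^(n+1) - u.1.1
        rw [hx, pow_succ]; ring
      · refine exW_len (exW_trans (exW_congr hu' eXK2Y (exW_map (homX n) h2))
          (exW_congr rfl eYK2 (exW_map (homY n) (ih (K1 n)).2.2))) ?_
        show (2:ℤ)^n - q.2 + ((2:ℤ)^n - (0:ℤ)) = 2^(n+1) - u.1.2
        rw [hy, pow_succ]; ring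
    · -- copy 3
      set u' : VV (n+1) := ⟨q, hq⟩ with hu'def
      have hu' : homY n u' = u := Subtype.ext hEq
      have hx : u.1.1 = q.1 := by rw [← hEq]
      have hy : u.1.2 = q.2 + 2^n := by rw [← hEq]
      obtain ⟨h0, h1, h2⟩ := ih u'
      refine ⟨?_, ?_, ?_⟩
      · refine exW_len (exW_trans (exW_congr hu' eYK0 (exW_map (homY n) h0))
          (exW_congr rfl e0 (exW_map (homInc n) (ih (K2 n)).1))) ?_
        show q.1 + q.2 + ((0:ℤ) + (2:ℤ)^n) = u.1.1 + u.1.2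
        rw [hx, hy]; ring
      · refine exW_len (exW_trans (exW_congr hu' rfl (exW_map (homY n) h1))
          (exW_congr eXK2Y eXK1 (exW_map (homX n) (ih (K2 n)).2.1))) ?_
        show (2:ℤ)^n - q.1 + ((2:ℤ)^n - (0:ℤ)) = 2^(n+1) - u.1.1
        rw [hx, pow_succ]; ring
      · refine exW_len (exW_congr hu' eYK2 (exW_map (homY n) h2)) ?_
        show (2:ℤ)^n - q.2 = 2^(n+1) - u.1.2
        rw [hy, pow_succ]; ring

lemma walk_ge (n : ℕ) (φ : ℤ × ℤ → ℤ) (hφ : ∀ e ∈ sierpEdges (n+1), |φ e.1 - φ e.2| ≤ 1) :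
    ∀ {u v : VV (n+1)} (p : (sierpGraph (n+1)).Walk u v), |φ u.1 - φ v.1| ≤ p.length := by
  intro u v p
  induction p with
  | nil => simp
  | @cons a b c hadj p ih =>
    have h1 : |φ a.1 - φ b.1| ≤ 1 := by
      rcases hadj.2 with h | h
      · exact hφ _ h
      · rw [abs_sub_comm]; exact hφ _ h
    calc |φ a.1 - φ c.1| ≤ |φ a.1 - φ b.1| + |φ b.1 - φ c.1| := abs_sub_le _ _ _
      _ ≤ 1 + p.length := add_le_add h1 ih
      _ ≤ (p.cons hadj).length := by rw [SimpleGraph.Walk.length_cons]; push_cast; omega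

lemma abs_le_one_0 (n : ℕ) : ∀ e ∈ sierpEdges (n+1),
    |(fun p : ℤ × ℤ => p.1 + p.2) e.1 - (fun p : ℤ × ℤ => p.1 + p.2) e.2| ≤ 1 := by
  intro e he
  rcases edge_diff n e he with ⟨a, b⟩ | ⟨a, b⟩ | ⟨a, b⟩ <;>
    · simp only []
      rw [abs_le]; constructor <;> linarith

lemma abs_le_one_1 (n : ℕ) : ∀ e ∈ sierpEdges (n+1),
    |(fun p : ℤ × ℤ => -p.1) e.1 - (fun p : ℤ × ℤ => -p.1) e.2| ≤ 1 := by
  intro e he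
  rcases edge_diff n e he with ⟨a, b⟩ | ⟨a, b⟩ | ⟨a, b⟩ <;>
    · simp only []
      rw [abs_le]; constructor <;> linarith

lemma abs_le_one_2 (n : ℕ) : ∀ e ∈ sierpEdges (n+1),
    |(fun p : ℤ × ℤ => -p.2) e.1 - (fun p : ℤ × ℤ => -p.2) e.2| ≤ 1 := by
  intro e he
  rcases edge_diff n e he with ⟨a, b⟩ | ⟨a, b⟩ | ⟨a, b⟩ <;>
    · simp only []
      rw [abs_le]; constructor <;> linarith

lemma dist_eq (n : ℕ) (u : VV (n+1)) :
    (((sierpGraph (n+1)).dist u (K0 n) : ℤ) = u.1.1 + u.1.2) ∧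
    (((sierpGraph (n+1)).dist u (K1 n) : ℤ) = 2^n - u.1.1) ∧
    (((sierpGraph (n+1)).dist u (K2 n) : ℤ) = 2^n - u.1.2) := by
  obtain ⟨hb1, hb2, hb3⟩ := vert_bounds n u.1 u.2
  obtain ⟨⟨p0, hp0⟩, ⟨p1, hp1⟩, ⟨p2, hp2⟩⟩ := ub n u
  refine ⟨?_, ?_, ?_⟩
  · have hub : ((sierpGraph (n+1)).dist u (K0 n) : ℤ) ≤ u.1.1 + u.1.2 := by
      have := SimpleGraph.dist_le p0
      omega
    obtain ⟨q, hq⟩ := (p0.reachable).exists_walk_length_eq_dist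
    have hlb : |u.1.1 + u.1.2 - ((0:ℤ) + 0)| ≤ (q.length : ℤ) :=
      walk_ge n (fun p : ℤ × ℤ => p.1 + p.2) (abs_le_one_0 n) q
    rw [hq] at hlb
    have : |u.1.1 + u.1.2 - ((0:ℤ) + 0)| = u.1.1 + u.1.2 := by
      rw [abs_of_nonneg] <;> omega
    omega
  · have hub : ((sierpGraph (n+1)).dist u (K1 n) : ℤ) ≤ 2^n - u.1.1 := by
      have := SimpleGraph.dist_le p1
      omega
    obtain ⟨q, hq⟩ := (p1.reachable).exists_walk_length_eq_dist
    have hlb : |-u.1.1 - -((2:ℤ)^n)| ≤ (q.length : ℤ) :=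
      walk_ge n (fun p : ℤ × ℤ => -p.1) (abs_le_one_1 n) q
    rw [hq] at hlb
    have : |-u.1.1 - -((2:ℤ)^n)| = 2^n - u.1.1 := by
      rw [show -u.1.1 - -((2:ℤ)^n) = 2^n - u.1.1 by ring, abs_of_nonneg] ; omega
    omega
  · have hub : ((sierpGraph (n+1)).dist u (K2 n) : ℤ) ≤ 2^n - u.1.2 := by
      have := SimpleGraph.dist_le p2
      omega
    obtain ⟨q, hq⟩ := (p2.reachable).exists_walk_length_eq_dist
    have hlb : |-u.1.2 - -((2:ℤ)^n)| ≤ (q.length : ℤ) :=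
      walk_ge n (fun p : ℤ × ℤ => -p.2) (abs_le_one_2 n) q
    rw [hq] at hlb
    have : |-u.1.2 - -((2:ℤ)^n)| = 2^n - u.1.2 := by
      rw [show -u.1.2 - -((2:ℤ)^n) = 2^n - u.1.2 by ring, abs_of_nonneg] ; omega
    omega

def F (t : ℤ) : ℤ := 2 ^ t.toNat

def S (m : ℕ) : ℤ := ∑ p ∈ sierpVerts m, F (p.1 + p.2)

lemma refl_mem : ∀ n : ℕ, ∀ p ∈ sierpVerts (n+1), ((2:ℤ)^n - p.1 - p.2, p.2) ∈ sierpVerts (n+1) := by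
  intro n
  induction n with
  | zero => decide
  | succ n ih =>
    intro p hp
    rcases mem_succ_iff.mp hp with h | ⟨q, hq, rfl⟩ | ⟨q, hq, rfl⟩
    · refine mem_succ_iff.mpr (Or.inr (Or.inl ⟨((2:ℤ)^n - p.1 - p.2, p.2), ih p h, ?_⟩))
      rw [Prod.mk.injEq]; constructor
      · rw [pow_succ]; ring
      · rfl
    · refine mem_succ_iff.mpr (Or.inl ?_)
      have : ((2:ℤ)^(n+1) - (q.1 + 2^n) - q.2, q.2) = ((2:ℤ)^n - q.1 - q.2, q.2) := by
        rw [Prod.mk.injEq]; constructor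
        · rw [pow_succ]; ring
        · rfl
      rw [this]; exact ih q hq
    · refine mem_succ_iff.mpr (Or.inr (Or.inr ⟨((2:ℤ)^n - q.1 - q.2, q.2), ih q hq, ?_⟩))
      rw [Prod.mk.injEq]; constructor
      · rw [pow_succ]; ring
      · rfl

lemma swap_mem : ∀ n : ℕ, ∀ p ∈ sierpVerts (n+1), (p.2, p.1) ∈ sierpVerts (n+1) := by
  intro n
  induction n with
  | zero => decide
  | succ n ih =>
    intro p hp
    rcases mem_succ_iff.mp hp with h | ⟨q, hq, rfl⟩ | ⟨q, hq, rfl⟩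
    · exact mem_succ_iff.mpr (Or.inl (ih p h))
    · exact mem_succ_iff.mpr (Or.inr (Or.inr ⟨(q.2, q.1), ih q hq, rfl⟩))
    · exact mem_succ_iff.mpr (Or.inr (Or.inl ⟨(q.2, q.1), ih q hq, rfl⟩))

lemma sum_phi1 (n : ℕ) :
    ∑ p ∈ sierpVerts (n+1), F (2^n - p.1) = S (n+1) := by
  refine Finset.sum_nbij' (fun p : ℤ×ℤ => ((2:ℤ)^n - p.1 - p.2, p.2))
    (fun p : ℤ×ℤ => ((2:ℤ)^n - p.1 - p.2, p.2)) (refl_mem n) (refl_mem n) ?_ ?_ ?_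
  · intro p _; rw [Prod.mk.injEq]; constructor <;> ring
  · intro p _; rw [Prod.mk.injEq]; constructor <;> ring
  · intro p _; show F (2^n - p.1) = F ((2:ℤ)^n - p.1 - p.2 + p.2); congr 1; ring

lemma sum_phi2 (n : ℕ) :
    ∑ p ∈ sierpVerts (n+1), F (2^n - p.2) = S (n+1) := by
  rw [← sum_phi1 n]
  refine Finset.sum_nbij' (fun p : ℤ×ℤ => (p.2, p.1)) (fun p : ℤ×ℤ => (p.2, p.1))
    (swap_mem n) (swap_mem n) (fun p _ => rfl) (fun p _ => rfl) (fun p _ => rfl)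

lemma dist_toNat {m : ℕ} {d : ℕ} {t : ℤ} (h : (d : ℤ) = t) : d = t.toNat := by
  rw [← h, Int.toNat_natCast]

lemma sum_corner0 (n : ℕ) :
    ∑ u : VV (n+1), (2:ℤ)^((sierpGraph (n+1)).dist u (K0 n)) = S (n+1) := by
  have key : ∀ u : VV (n+1), (2:ℤ)^((sierpGraph (n+1)).dist u (K0 n)) = F (u.1.1 + u.1.2) := by
    intro u
    rw [dist_toNat (m := n) (dist_eq n u).1]; rfl
  rw [Finset.sum_congr rfl (fun u _ => key u)]
  exact Finset.sum_coe_sort _ (fun p : ℤ×ℤ => F (p.1 + p.2))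

lemma sum_corner1 (n : ℕ) :
    ∑ u : VV (n+1), (2:ℤ)^((sierpGraph (n+1)).dist u (K1 n)) = S (n+1) := by
  have key : ∀ u : VV (n+1), (2:ℤ)^((sierpGraph (n+1)).dist u (K1 n)) = F (2^n - u.1.1) := by
    intro u
    rw [dist_toNat (m := n) (dist_eq n u).2.1]; rfl
  rw [Finset.sum_congr rfl (fun u _ => key u)]
  rw [Finset.sum_coe_sort _ (fun p : ℤ×ℤ => F (2^n - p.1))]
  exact sum_phi1 n

lemma sum_corner2 (n : ℕ) :
    ∑ u : VV (n+1), (2:ℤ)^((sierpGraph (n+1)).dist u (K2 n)) = S (n+1) := by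
  have key : ∀ u : VV (n+1), (2:ℤ)^((sierpGraph (n+1)).dist u (K2 n)) = F (2^n - u.1.2) := by
    intro u
    rw [dist_toNat (m := n) (dist_eq n u).2.2]; rfl
  rw [Finset.sum_congr rfl (fun u _ => key u)]
  rw [Finset.sum_coe_sort _ (fun p : ℤ×ℤ => F (2^n - p.2))]
  exact sum_phi2 n

lemma toNat_pow (n : ℕ) : ((2:ℤ)^n).toNat = 2^n := by
  have : (2:ℤ)^n = ((2^n : ℕ) : ℤ) := by push_cast; rfl
  rw [this, Int.toNat_natCast]

lemma F_add_pow (n : ℕ) {t : ℤ} (ht : 0 ≤ t) : F (t + 2^n) = 2^(2^n) * F t := by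
  unfold F
  rw [Int.toNat_add ht (by positivity), pow_add, toNat_pow, mul_comm]

lemma F_pow (n : ℕ) : F ((2:ℤ)^n) = 2^(2^n) := by
  unfold F; rw [toNat_pow]

lemma S_rec (n : ℕ) : S (n+2) = S (n+1) + 2 * 2^(2^n) * (S (n+1) - 1) - 2^(2^(n+1)) := by
  classical
  set A := sierpVerts (n+1) with hA
  set B := A.image (fun p : ℤ×ℤ => (p.1 + 2^n, p.2)) with hB
  set C := A.image (fun p : ℤ×ℤ => (p.1, p.2 + 2^n)) with hC
  set f : ℤ×ℤ → ℤ := fun p => F (p.1 + p.2) with hf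
  have h2pos : (0:ℤ) < 2^n := by positivity
  have hverts : sierpVerts (n+2) = A ∪ B ∪ C := rfl
  have hSB : ∑ p ∈ B, f p = 2^(2^n) * S (n+1) := by
    rw [hB, Finset.sum_image (by
      intro q hq r hr h
      rw [Prod.mk.injEq] at h
      exact Prod.ext (by linarith [h.1]) h.2)]
    rw [S, Finset.mul_sum]
    refine Finset.sum_congr rfl fun q hq => ?_
    obtain ⟨a, b, _⟩ := vert_bounds n q hq
    show F (q.1 + 2^n + q.2) = 2^(2^n) * F (q.1 + q.2)
    rw [show q.1 + 2^n + q.2 = (q.1 + q.2) + 2^n by ring, F_add_pow n (by linarith)]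
  have hSC : ∑ p ∈ C, f p = 2^(2^n) * S (n+1) := by
    rw [hC, Finset.sum_image (by
      intro q hq r hr h
      rw [Prod.mk.injEq] at h
      exact Prod.ext h.1 (by linarith [h.2]))]
    rw [S, Finset.mul_sum]
    refine Finset.sum_congr rfl fun q hq => ?_
    obtain ⟨a, b, _⟩ := vert_bounds n q hq
    show F (q.1 + (q.2 + 2^n)) = 2^(2^n) * F (q.1 + q.2)
    rw [show q.1 + (q.2 + 2^n) = (q.1 + q.2) + 2^n by ring, F_add_pow n (by linarith)]
  have hAB : A ∩ B = {((2:ℤ)^n, 0)} := by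
    ext p
    simp only [Finset.mem_inter, Finset.mem_image, Finset.mem_singleton, hB]
    constructor
    · rintro ⟨hpA, q, hq, rfl⟩
      obtain ⟨a1, b1, c1⟩ := vert_bounds n _ hpA
      obtain ⟨a2, b2, c2⟩ := vert_bounds n q hq
      simp only at a1 b1 c1 ⊢
      rw [Prod.mk.injEq]
      constructor <;> linarith
    · rintro rfl
      refine ⟨?_, (0, 0), c0_mem n, by norm_num⟩
      exact c1_mem n
  have hABC : (A ∪ B) ∩ C = {((0:ℤ), (2:ℤ)^n), ((2:ℤ)^n, (2:ℤ)^n)} := by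
    ext p
    simp only [Finset.mem_inter, Finset.mem_union, Finset.mem_image, Finset.mem_insert,
      Finset.mem_singleton, hB, hC]
    constructor
    · rintro ⟨hAB', q, hq, rfl⟩
      obtain ⟨a2, b2, c2⟩ := vert_bounds n q hq
      rcases hAB' with hpA | ⟨r, hr, hrEq⟩
      · obtain ⟨a1, b1, c1⟩ := vert_bounds n _ hpA
        simp only at a1 b1 c1
        left; rw [Prod.mk.injEq]; constructor <;> linarith
      · obtain ⟨a3, b3, c3⟩ := vert_bounds n r hr
        rw [Prod.mk.injEq] at hrEq
        right; rw [Prod.mk.injEq]; constructor <;> linarith [hrEq.1, hrEq.2]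
    · rintro (rfl | rfl)
      · exact ⟨Or.inl (c2_mem n), (0,0), c0_mem n, by norm_num⟩
      · exact ⟨Or.inr ⟨(0, 2^n), c2_mem n, by norm_num⟩, ((2:ℤ)^n, 0), c1_mem n, by norm_num⟩
  have h1 : ∑ p ∈ A ∪ B, f p + ∑ p ∈ A ∩ B, f p = ∑ p ∈ A, f p + ∑ p ∈ B, f p :=
    Finset.sum_union_inter
  have h2 : ∑ p ∈ (A ∪ B) ∪ C, f p + ∑ p ∈ (A ∪ B) ∩ C, f p
      = ∑ p ∈ A ∪ B, f p + ∑ p ∈ C, f p := Finset.sum_union_inter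
  have hsing : ∑ p ∈ A ∩ B, f p = 2^(2^n) := by
    rw [hAB, Finset.sum_singleton]
    show F ((2:ℤ)^n + 0) = _
    rw [add_zero, F_pow]
  have hne : ((0:ℤ), (2:ℤ)^n) ≠ ((2:ℤ)^n, (2:ℤ)^n) := by
    rw [Ne, Prod.mk.injEq]; intro h; linarith [h.1]
  have hpair : ∑ p ∈ (A ∪ B) ∩ C, f p = 2^(2^n) + 2^(2^(n+1)) := by
    rw [hABC, Finset.sum_insert (by simpa using hne), Finset.sum_singleton]
    congr 1
    · show F ((0:ℤ) + 2^n) = _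
      rw [zero_add, F_pow]
    · show F ((2:ℤ)^n + 2^n) = _
      rw [F_add_pow n (by positivity), F_pow, ← pow_add]
      congr 1
      omega
  have hSA : ∑ p ∈ A, f p = S (n+1) := rfl
  have hS2 : S (n+2) = ∑ p ∈ (A ∪ B) ∪ C, f p := by rw [S, hverts]
  rw [hS2]
  linarith [h1, h2]

end SierpAux

open SierpAux in
theorem sierp_stacking_sum_recursion (n : ℕ) (hn : 1 ≤ n)
    (a : {p : ℤ × ℤ // p ∈ sierpVerts n}) (ha : a.1 ∈ sierpCorners n)
    (b : {p : ℤ × ℤ // p ∈ sierpVerts (n + 1)}) (hb : b.1 ∈ sierpCorners (n + 1)) :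
    (∑ u : {p : ℤ × ℤ // p ∈ sierpVerts (n + 1)},
        (2 : ℤ) ^ ((sierpGraph (n + 1)).dist u b)) =
      (∑ u : {p : ℤ × ℤ // p ∈ sierpVerts n}, (2 : ℤ) ^ ((sierpGraph n).dist u a)) +
        2 * 2 ^ (2 ^ (n - 1)) *
          ((∑ u : {p : ℤ × ℤ // p ∈ sierpVerts n}, (2 : ℤ) ^ ((sierpGraph n).dist u a)) - 1) -
        2 ^ (2 ^ n) := by
  obtain ⟨k, rfl⟩ : ∃ k, n = k + 1 := ⟨n - 1, by omega⟩
  have ha' : a.1 = ((0:ℤ), (0:ℤ)) ∨ a.1 = ((2:ℤ)^k, (0:ℤ)) ∨ a.1 = ((0:ℤ), (2:ℤ)^k) := by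
    simpa [sierpCorners, Nat.add_sub_cancel] using ha
  have hb' : b.1 = ((0:ℤ), (0:ℤ)) ∨ b.1 = ((2:ℤ)^(k+1), (0:ℤ)) ∨ b.1 = ((0:ℤ), (2:ℤ)^(k+1)) := by
    simpa [sierpCorners, Nat.add_sub_cancel] using hb
  have hsa : (∑ u : {p : ℤ × ℤ // p ∈ sierpVerts (k+1)},
      (2 : ℤ) ^ ((sierpGraph (k+1)).dist u a)) = S (k+1) := by
    rcases ha' with h | h | h
    · rw [show a = K0 k from Subtype.ext h]; exact sum_corner0 k
    · rw [show a = K1 k from Subtype.ext h]; exact sum_corner1 k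
    · rw [show a = K2 k from Subtype.ext h]; exact sum_corner2 k
  have hsb : (∑ u : {p : ℤ × ℤ // p ∈ sierpVerts (k+1+1)},
      (2 : ℤ) ^ ((sierpGraph (k+1+1)).dist u b)) = S (k+2) := by
    rcases hb' with h | h | h
    · rw [show b = K0 (k+1) from Subtype.ext h]; exact sum_corner0 (k+1)
    · rw [show b = K1 (k+1) from Subtype.ext h]; exact sum_corner1 (k+1)
    · rw [show b = K2 (k+1) from Subtype.ext h]; exact sum_corner2 (k+1)
  rw [hsa, hsb, Nat.add_sub_cancel]
  exact S_rec k
end
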